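/- arXiv:2603.26218 — 6 statements merged into one kernel-verified Lean document; each statement's English description precedes it below -/
import Mathlib

section
/- If a nonnegative differentiable function H on [0,∞) satisfies H'(t) + a·H(t)·(1 − b·H(t)) ≤ 0 for all t ≥ 0, where a, b > 0, and H(0) ≤ 1/(2b), then H is nonincreasing and H(t) ≤ H(0)·exp(−(a/2)·t) for all t ≥ 0. -/
/-- Generalized Grönwall-type lemma: if a nonnegative differentiable `H` on `[0,∞)`
satisfies `H' + a·H·(1 − b·H) ≤ 0` with `a, b > 0` and `H 0 ≤ 1/(2b)`, then `H` is
nonincreasing on `[0,∞)` and decays like `exp (−(a/2) t)`. -/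
theorem gronwall_quadratic_decay (H : ℝ → ℝ) (a b : ℝ) (ha : 0 < a) (hb : 0 < b)
    (hdiff : Differentiable ℝ H)
    (hnonneg : ∀ t, 0 ≤ t → 0 ≤ H t)
    (hineq : ∀ t, 0 ≤ t → deriv H t + a * H t * (1 - b * H t) ≤ 0)
    (h0 : H 0 ≤ 1 / (2 * b)) :
    (∀ s t, 0 ≤ s → s ≤ t → H t ≤ H s) ∧
      (∀ t, 0 ≤ t → H t ≤ H 0 * Real.exp (-(a / 2) * t)) := by
  have hcont : Continuous H := hdiff.continuous
  -- If H ≤ 1/b on an open interval within [0,∞), then H decreases across it.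
  have dec : ∀ s t : ℝ, 0 ≤ s → s ≤ t → (∀ x ∈ Set.Ioo s t, H x ≤ 1 / b) →
      H t ≤ H s := by
    intro s t hs hst hbnd
    have hanti : AntitoneOn H (Set.Icc s t) := by
      apply antitoneOn_of_deriv_nonpos (convex_Icc s t) hcont.continuousOn
        (hdiff.differentiableOn.mono interior_subset)
      intro x hx
      rw [interior_Icc] at hx
      have hx0 : 0 ≤ x := le_trans hs hx.1.le
      have hHx := hnonneg x hx0
      have hHxb := hbnd x hx
      have h1 : b * H x ≤ 1 := by
        calc b * H x ≤ b * (1 / b) := by nlinarith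
        _ = 1 := by field_simp
      have h2 := hineq x hx0
      nlinarith [mul_nonneg (mul_nonneg ha.le hHx) (by linarith : (0:ℝ) ≤ 1 - b * H x)]
    exact hanti (Set.left_mem_Icc.2 hst) (Set.right_mem_Icc.2 hst) hst
  -- Barrier: H never exceeds 1/(2b) on [0,∞).
  have key : ∀ t, 0 ≤ t → H t ≤ 1 / (2 * b) := by
    intro t0 ht0
    by_contra hlt
    push_neg at hlt
    have hbb : 1 / (2 * b) < 1 / b := by
      rw [div_lt_div_iff₀ (by linarith) hb]; linarith
    set S : Set ℝ := Set.Icc 0 t0 ∩ H ⁻¹' Set.Iic (1 / (2 * b)) with hS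
    have hSne : S.Nonempty := ⟨0, ⟨Set.left_mem_Icc.2 ht0, h0⟩⟩
    have hSbdd : BddAbove S := (BddAbove.mono Set.inter_subset_left) bddAbove_Icc
    have hSclosed : IsClosed S := (isClosed_Icc).inter (isClosed_Iic.preimage hcont)
    set t1 := sSup S with ht1
    have ht1mem : t1 ∈ S := hSclosed.csSup_mem hSne hSbdd
    have ht1le : t1 ≤ t0 := ht1mem.1.2
    have ht10 : 0 ≤ t1 := ht1mem.1.1
    have hHt1 : H t1 ≤ 1 / (2 * b) := ht1mem.2
    have habove : ∀ x, t1 < x → x ≤ t0 → 1 / (2 * b) < H x := by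
      intro x hx1 hx2
      by_contra hc
      push_neg at hc
      have : x ∈ S := ⟨⟨le_trans ht10 hx1.le, hx2⟩, hc⟩
      exact absurd (le_csSup hSbdd this) (not_le.2 hx1)
    set T : Set ℝ := Set.Icc t1 t0 ∩ H ⁻¹' Set.Ici (1 / b) with hT
    rcases T.eq_empty_or_nonempty with hTe | hTne
    · -- H < 1/b on the whole [t1, t0]; so H decreases, contradiction
      have : H t0 ≤ H t1 := by
        apply dec t1 t0 ht10 ht1le
        intro x hx
        by_contra hc
        push_neg at hc
        have : x ∈ T := ⟨⟨hx.1.le, hx.2.le⟩, hc.le⟩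
        rw [hTe] at this
        exact this
      linarith
    · have hTbdd : BddBelow T := (BddBelow.mono Set.inter_subset_left) bddBelow_Icc
      have hTclosed : IsClosed T := (isClosed_Icc).inter (isClosed_Ici.preimage hcont)
      set t2 := sInf T with ht2
      have ht2mem : t2 ∈ T := hTclosed.csInf_mem hTne hTbdd
      have ht2a : t1 ≤ t2 := ht2mem.1.1
      have ht2b : t2 ≤ t0 := ht2mem.1.2
      have hHt2 : 1 / b ≤ H t2 := ht2mem.2
      have ht12 : t1 < t2 := by
        rcases lt_or_eq_of_le ht2a with h | h
        · exact h
        · exfalso; rw [← h] at hHt2; linarith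
      have : H t2 ≤ H t1 := by
        apply dec t1 t2 ht10 ht2a
        intro x hx
        by_contra hc
        push_neg at hc
        have : x ∈ T := ⟨⟨hx.1.le, le_trans hx.2.le ht2b⟩, hc.le⟩
        exact absurd (csInf_le hTbdd this) (not_le.2 hx.2)
      linarith
  -- From the barrier: deriv H t ≤ -(a/2) * H t on [0,∞).
  have derB : ∀ t, 0 ≤ t → deriv H t ≤ -(a / 2) * H t := by
    intro t ht
    have h1 := hineq t ht
    have h2 := key t ht
    have h3 := hnonneg t ht
    have hbH : b * H t ≤ 1 / 2 := by
      calc b * H t ≤ b * (1 / (2 * b)) := by nlinarith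
      _ = 1 / 2 := by field_simp
    nlinarith [mul_nonneg (mul_nonneg ha.le h3) (by linarith : (0:ℝ) ≤ 1 / 2 - b * H t)]
  have hanti : AntitoneOn H (Set.Ici 0) := by
    apply antitoneOn_of_deriv_nonpos (convex_Ici 0) hcont.continuousOn
      (hdiff.differentiableOn.mono interior_subset)
    intro x hx
    rw [interior_Ici] at hx
    have := derB x hx.le
    have := hnonneg x hx.le
    nlinarith
  constructor
  · intro s t hs hst
    exact hanti (Set.mem_Ici.2 hs) (Set.mem_Ici.2 (le_trans hs hst)) hst
  · intro t ht
    set φ : ℝ → ℝ := fun u => H u * Real.exp (a / 2 * u) with hφdef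
    have hφd : ∀ u, HasDerivAt φ
        (deriv H u * Real.exp (a / 2 * u) + H u * (Real.exp (a / 2 * u) * (a / 2))) u := by
      intro u
      have h := ((hdiff u).hasDerivAt).mul (((hasDerivAt_id u).const_mul (a / 2)).exp)
      simpa [hφdef, Pi.mul_def] using h
    have hφanti : AntitoneOn φ (Set.Ici 0) := by
      apply antitoneOn_of_deriv_nonpos (convex_Ici 0)
        ((hcont.mul (Real.continuous_exp.comp (continuous_const.mul continuous_id))).continuousOn)
        (fun x _ => (hφd x).differentiableAt.differentiableWithinAt)
      intro x hx
      rw [interior_Ici] at hx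
      show deriv φ x ≤ 0
      rw [(hφd x).deriv]
      have h1 := derB x hx.le
      have h2 := Real.exp_pos (a / 2 * x)
      have h3 := mul_le_mul_of_nonneg_right h1 h2.le
      nlinarith [h3]
    have hφle : φ t ≤ φ 0 := hφanti (Set.self_mem_Ici) (Set.mem_Ici.2 ht) ht
    have hφ0 : φ 0 = H 0 := by simp [hφdef]
    have hept : (0:ℝ) < Real.exp (a / 2 * t) := Real.exp_pos _
    have : H t * Real.exp (a / 2 * t) ≤ H 0 := by rwa [hφ0] at hφle
    have hexp : Real.exp (-(a / 2) * t) = (Real.exp (a / 2 * t))⁻¹ := by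
      rw [← Real.exp_neg]; ring_nf
    rw [hexp, ← div_eq_mul_inv, le_div_iff₀ hept]
    linarith
end

section
/- Let U be a finite-dimensional inner product space and A, A* : U → U linear maps satisfying ⟨A u, v⟩ = ⟨u, A* v⟩ for all u, v ∈ U. Let D∞ ∈ U with A·D∞ = 0 and suppose ⟨A* u, D∞⟩ = 0 for all u ∈ U (so D∞ is in the kernel of both operators in the appropriate sense). Let (D_k(t))_{0≤k≤N} solve the skew-symmetric Hermite cascade: D₀' = A* D₁, D_k' = −√k·A D_{k−1} + √(k+1)·A* D_{k+1} − (k/τ₀)·D_k for 1 ≤ k ≤ N, with D_{N+1} = 0 and without any forcing. Then the quantity Σ_{k=0}^{N} ‖D_k(t) − δ_{k0}·D∞‖² satisfies d/dt [½ Σ_k ‖D_k − δ_{k0} D∞‖²] = −(1/τ₀)·Σ_{k=1}^N k·‖D_k‖². -/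
/-- Hermite-mode energy identity: for the unforced skew-symmetric Hermite cascade with
adjoint operators `A`, `A*` and equilibrium mode `D∞` in the kernel, the transport terms
cancel pairwise and only the collisional dissipation remains. -/
theorem hermite_cascade_energy_identity
    {U : Type*} [NormedAddCommGroup U] [InnerProductSpace ℝ U] [FiniteDimensional ℝ U]
    (A Astar : U →ₗ[ℝ] U)
    (hadj : ∀ u v : U, (inner ℝ (A u) (v) : ℝ) = (inner ℝ (u) (Astar v) : ℝ))
    (N : ℕ) (hN : 1 ≤ N) (τ₀ : ℝ) (hτ₀ : 0 < τ₀)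
    (Dinf : U) (hker : A Dinf = 0) (hker' : ∀ u : U, (inner ℝ (Astar u) (Dinf) : ℝ) = 0)
    (D : ℕ → ℝ → U)
    (hD0 : ∀ t : ℝ, HasDerivAt (D 0) (Astar (D 1 t)) t)
    (hDk : ∀ k : ℕ, 1 ≤ k → k ≤ N → ∀ t : ℝ,
      HasDerivAt (D k)
        (-(Real.sqrt k) • A (D (k - 1) t) + Real.sqrt (k + 1) • Astar (D (k + 1) t)
          - ((k : ℝ) / τ₀) • D k t) t)
    (htop : ∀ t : ℝ, D (N + 1) t = 0) :
    ∀ t : ℝ,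
      HasDerivAt
        (fun s => (1 / 2 : ℝ) *
          ∑ k ∈ Finset.range (N + 1), ‖D k s - (if k = 0 then Dinf else 0)‖ ^ 2)
        (-(1 / τ₀) * ∑ k ∈ Finset.range (N + 1), (k : ℝ) * ‖D k t‖ ^ 2) t := by
  intro t
  set c : ℕ → U := fun k => if k = 0 then Dinf else 0 with hc
  set d : ℕ → U := fun k =>
    if k = 0 then Astar (D 1 t)
    else -(Real.sqrt k) • A (D (k - 1) t) + Real.sqrt (k + 1) • Astar (D (k + 1) t)
      - ((k : ℝ) / τ₀) • D k t with hd
  have hderiv : ∀ k ∈ Finset.range (N + 1), HasDerivAt (D k) (d k) t := by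
    intro k hk
    rcases Nat.eq_zero_or_pos k with rfl | hk1
    · simpa [hd] using hD0 t
    · have hkN : k ≤ N := Nat.lt_succ_iff.mp (Finset.mem_range.mp hk)
      have := hDk k hk1 hkN t
      simpa [hd, Nat.pos_iff_ne_zero.mp hk1] using this
  have hsq : ∀ k ∈ Finset.range (N + 1),
      HasDerivAt (fun s => ‖D k s - c k‖ ^ 2)
        (2 * (inner ℝ (D k t - c k) (d k) : ℝ)) t := by
    intro k hk
    have h1 : HasDerivAt (fun s => D k s - c k) (d k) t :=
      (hderiv k hk).sub_const (c k)
    have h2 := h1.inner ℝ h1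
    have h3 : (inner ℝ (D k t - c k) (d k) : ℝ) + (inner ℝ (d k) (D k t - c k) : ℝ)
        = 2 * (inner ℝ (D k t - c k) (d k) : ℝ) := by
      rw [real_inner_comm (d k)]; ring
    simp only [← real_inner_self_eq_norm_sq]
    rw [← h3]
    exact h2
  have hsum := (HasDerivAt.fun_sum hsq).const_mul (1 / 2 : ℝ)
  -- telescoping pieces
  set a : ℕ → ℝ := fun k => Real.sqrt (k + 1) * (inner ℝ (A (D k t)) (D (k + 1) t) : ℝ)
    with ha
  have h0 : (inner ℝ (D 0 t - c 0) (d 0) : ℝ) = a 0 := by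
    simp only [hc, hd, ha, if_pos rfl]
    have hz : (inner ℝ Dinf (Astar (D 1 t)) : ℝ) = 0 := by
      rw [real_inner_comm]; exact hker' _
    rw [inner_sub_left, hz, ← hadj]
    norm_num
  have hsucc : ∀ k ∈ Finset.range N,
      (inner ℝ (D (k + 1) t - c (k + 1)) (d (k + 1)) : ℝ)
        = a (k + 1) - a k - (((k : ℝ) + 1) / τ₀) * ‖D (k + 1) t‖ ^ 2 := by
    intro k _
    have hne : k + 1 ≠ 0 := Nat.succ_ne_zero k
    simp only [hc, hd, ha, if_neg hne, sub_zero, Nat.add_sub_cancel,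
      inner_sub_right, inner_add_right, real_inner_smul_right]
    rw [real_inner_comm (D (k + 1) t) (A (D k t)), ← hadj, real_inner_self_eq_norm_sq]
    push_cast
    ring
  have hsumval : (∑ k ∈ Finset.range (N + 1), (inner ℝ (D k t - c k) (d k) : ℝ))
      = -(1 / τ₀) * ∑ k ∈ Finset.range (N + 1), (k : ℝ) * ‖D k t‖ ^ 2 := by
    rw [Finset.sum_range_succ' (fun k => (inner ℝ (D k t - c k) (d k) : ℝ)),
      Finset.sum_congr rfl hsucc, h0]
    have htel : ∑ k ∈ Finset.range N,
        (a (k + 1) - a k - (((k : ℝ) + 1) / τ₀) * ‖D (k + 1) t‖ ^ 2)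
        = (a N - a 0) - ∑ k ∈ Finset.range N, (((k : ℝ) + 1) / τ₀) * ‖D (k + 1) t‖ ^ 2 := by
      rw [Finset.sum_sub_distrib, Finset.sum_range_sub a]
    rw [htel]
    have haN : a N = 0 := by simp [ha, htop t]
    rw [haN]
    rw [Finset.sum_range_succ' (fun k => (k : ℝ) * ‖D k t‖ ^ 2)]
    push_cast
    have hfold : (1 / τ₀) * ∑ k ∈ Finset.range N, (((k : ℝ) + 1) * ‖D (k + 1) t‖ ^ 2)
        = ∑ k ∈ Finset.range N, (((k : ℝ) + 1) / τ₀) * ‖D (k + 1) t‖ ^ 2 := by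
      rw [Finset.mul_sum]
      exact Finset.sum_congr rfl fun k _ => by ring
    simp only [zero_mul, add_zero, mul_zero]
    linear_combination hfold
  refine hsum.congr_deriv ?_
  symm
  rw [← hsumval, Finset.mul_sum]
  exact (Finset.sum_congr rfl fun k hk => by ring).symm
end

section
/- In the setting of the semi-discrete linearized Vlasov-Poisson-Fokker-Planck scheme, the linearized energy E_h(t) = (1/(2D∞,₀))·Σ_{k=0}^{N_H} ‖D_{h,k}(t) − D_{∞,k}‖²_{L²(𝕋)} + (1/(2T₀))·‖E_h(t)‖²_{L²(𝕋)} satisfies the exact dissipation identity d/dt E_h(t) + (1/τ₀)·I_h(t) = 0, where I_h(t) = (1/D∞,₀)·Σ_{k=0}^{N_H} k·‖D_{h,k}(t) − D_{∞,k}‖²_{L²(𝕋)}. -/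
lemma lm_hasDerivAt {U V : Type*} [NormedAddCommGroup U] [NormedSpace ℝ U]
    [FiniteDimensional ℝ U] [NormedAddCommGroup V] [NormedSpace ℝ V]
    (L : U →ₗ[ℝ] V) {f : ℝ → U} {f' : U} {t : ℝ} (hf : HasDerivAt f f' t) :
    HasDerivAt (fun s => L (f s)) (L f') t :=
  (LinearMap.toContinuousLinearMap L).hasFDerivAt.comp_hasDerivAt t hf

lemma hasDerivAt_norm_sq' {U : Type*} [NormedAddCommGroup U] [InnerProductSpace ℝ U]
    {f : ℝ → U} {f' : U} {t : ℝ} (hf : HasDerivAt f f' t) :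
    HasDerivAt (fun s => ‖f s‖ ^ 2) (2 * (inner ℝ f' (f t) : ℝ)) t := by
  have h := hf.inner ℝ hf
  have heq : (fun s => ‖f s‖ ^ 2) = fun s => (inner ℝ (f s) (f s) : ℝ) := by
    funext s; rw [real_inner_self_eq_norm_sq]
  rw [heq]
  convert h using 1
  case e'_4 => rfl
  case e'_5 => rfl
  rw [real_inner_comm (f t) f']; ring

/-- Exact dissipation identity for the linearized energy of the semi-discrete linearized
Vlasov–Poisson–Fokker–Planck scheme: `d/dt E_h + (1/τ₀) I_h = 0`. -/
theorem linearized_energy_dissipation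
    {U W : Type*} [NormedAddCommGroup U] [InnerProductSpace ℝ U] [FiniteDimensional ℝ U]
    [NormedAddCommGroup W] [InnerProductSpace ℝ W] [FiniteDimensional ℝ W]
    (A Astar : U →ₗ[ℝ] U) (B : U →ₗ[ℝ] W) (Bstar : W →ₗ[ℝ] U)
    (hadjA : ∀ u v : U, (inner ℝ (A u) (v) : ℝ) = (inner ℝ (u) (Astar v) : ℝ))
    (hadjB : ∀ (v : U) (w : W), (inner ℝ (B v) (w) : ℝ) = (inner ℝ (v) (Bstar w) : ℝ))
    (N : ℕ) (hN : 2 ≤ N) (τ₀ T₀ ρinf : ℝ) (hτ₀ : 0 < τ₀) (hT₀ : 0 < T₀) (hρ : 0 < ρinf)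
    (Dinf0 : U) (hker : A Dinf0 = 0)
    (D : ℕ → ℝ → U) (Φ : ℝ → U) (E : ℝ → W)
    (hEdiff : Differentiable ℝ E)
    (hD0 : ∀ t : ℝ, HasDerivAt (D 0) (Astar (D 1 t)) t)
    (hD1 : ∀ t : ℝ, HasDerivAt (D 1)
      (-(A (D 0 t)) + Real.sqrt 2 • Astar (D 2 t) - (ρinf / T₀) • A (Φ t)
        - (1 / τ₀) • D 1 t) t)
    (hDk : ∀ k : ℕ, 2 ≤ k → k ≤ N → ∀ t : ℝ,
      HasDerivAt (D k)
        (-(Real.sqrt k) • A (D (k - 1) t) + Real.sqrt (k + 1) • Astar (D (k + 1) t)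
          - ((k : ℝ) / τ₀) • D k t) t)
    (htop : ∀ t : ℝ, D (N + 1) t = 0)
    (hE : ∀ t : ℝ, E t = -(B (Φ t)))
    (hPoisson : ∀ t : ℝ, -(Bstar (E t)) = D 0 t - Dinf0) :
    ∀ t : ℝ,
      HasDerivAt
        (fun s => (1 / (2 * ρinf)) *
            (∑ k ∈ Finset.range (N + 1), ‖D k s - (if k = 0 then Dinf0 else 0)‖ ^ 2)
          + (1 / (2 * T₀)) * ‖E s‖ ^ 2)
        (-(1 / τ₀) * ((1 / ρinf) *
          ∑ k ∈ Finset.range (N + 1),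
            (k : ℝ) * ‖D k t - (if k = 0 then Dinf0 else 0)‖ ^ 2)) t := by
  intro t
  have hρ' : ρinf ≠ 0 := ne_of_gt hρ
  have hT' : T₀ ≠ 0 := ne_of_gt hT₀
  have hτ' : τ₀ ≠ 0 := ne_of_gt hτ₀
  have hAstar : ∀ u v : U, (inner ℝ (Astar u) v : ℝ) = inner ℝ (A v) u := by
    intro u v; rw [real_inner_comm, ← hadjA]
  set d : ℕ → U := fun k =>
    if k = 0 then Astar (D 1 t)
    else if k = 1 then
      -(A (D 0 t)) + Real.sqrt 2 • Astar (D 2 t) - (ρinf / T₀) • A (Φ t) - (1 / τ₀) • D 1 t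
    else -(Real.sqrt k) • A (D (k - 1) t) + Real.sqrt (k + 1) • Astar (D (k + 1) t)
      - ((k : ℝ) / τ₀) • D k t with hd
  have hFk : ∀ k, k ≤ N →
      HasDerivAt (fun s => D k s - (if k = 0 then Dinf0 else (0 : U))) (d k) t := by
    intro k hk
    match k with
    | 0 => simpa [hd] using (hD0 t).sub_const Dinf0
    | 1 => simpa [hd] using (hD1 t).sub_const (0 : U)
    | (m + 2) => simpa [hd] using (hDk (m + 2) (by omega) hk t).sub_const (0 : U)
  have hsq : ∀ k ∈ Finset.range (N + 1),
      HasDerivAt (fun s => ‖D k s - (if k = 0 then Dinf0 else (0 : U))‖ ^ 2)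
        (2 * (inner ℝ (d k) (D k t - (if k = 0 then Dinf0 else 0)) : ℝ)) t := by
    intro k hk
    exact hasDerivAt_norm_sq' (hFk k (by simp only [Finset.mem_range] at hk; omega))
  have hsum := HasDerivAt.sum hsq
  have hBe : Bstar (deriv E t) = -(Astar (D 1 t)) := by
    have h1 : HasDerivAt (fun s => -(Bstar (E s))) (-(Bstar (deriv E t))) t :=
      (lm_hasDerivAt Bstar (hEdiff t).hasDerivAt).neg
    have h2 : HasDerivAt (fun s => -(Bstar (E s))) (Astar (D 1 t)) t := by
      have h3 : (fun s => -(Bstar (E s))) = fun s => D 0 s - Dinf0 := funext hPoisson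
      rw [h3]; exact (hD0 t).sub_const Dinf0
    have h4 := h1.unique h2
    exact neg_eq_iff_eq_neg.mp h4
  have hEinner : (inner ℝ (deriv E t) (E t) : ℝ) = inner ℝ (A (Φ t)) (D 1 t) := by
    rw [hE t, inner_neg_right, real_inner_comm (B (Φ t)) (deriv E t), hadjB, hBe,
      inner_neg_right, neg_neg]
    exact (hadjA (Φ t) (D 1 t)).symm
  set c : ℕ → ℝ := fun k => Real.sqrt k * (inner ℝ (A (D (k - 1) t)) (D k t) : ℝ) with hc
  have hkey : ∀ k ∈ Finset.range (N + 1),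
      (inner ℝ (d k) (D k t - (if k = 0 then Dinf0 else 0)) : ℝ)
        = (c (k + 1) - c k)
          - ((k : ℝ) / τ₀) * ‖D k t - (if k = 0 then Dinf0 else 0)‖ ^ 2
          - (if k = 1 then (ρinf / T₀) * (inner ℝ (A (Φ t)) (D 1 t) : ℝ) else 0) := by
    intro k _
    match k with
    | 0 =>
      simp only [hd, hc]
      norm_num
      rw [hAstar, map_sub, hker, sub_zero]
    | 1 =>
      simp only [hd, hc]
      norm_num
      rw [inner_sub_left, inner_sub_left, inner_add_left, inner_neg_left,
        real_inner_smul_left, real_inner_smul_left, real_inner_smul_left, hAstar,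
        real_inner_self_eq_norm_sq]
      ring
    | (m + 2) =>
      simp only [hd, hc]
      norm_num
      rw [if_neg (by omega : ¬ m + 2 = 1), if_neg (by omega : ¬ m + 2 = 1)]
      rw [inner_sub_left, inner_add_left, inner_neg_left,
        real_inner_smul_left, real_inner_smul_left, real_inner_smul_left, hAstar,
        real_inner_self_eq_norm_sq]
      ring
  have hc0 : c 0 = 0 := by simp [hc]
  have hcN : c (N + 1) = 0 := by simp [hc, htop t]
  have h2 : ∑ k ∈ Finset.range (N + 1),
        ((k : ℝ) / τ₀) * ‖D k t - (if k = 0 then Dinf0 else 0)‖ ^ 2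
      = (1 / τ₀) * ∑ k ∈ Finset.range (N + 1),
        (k : ℝ) * ‖D k t - (if k = 0 then Dinf0 else 0)‖ ^ 2 := by
    rw [Finset.mul_sum]
    exact Finset.sum_congr rfl fun k _ => by ring
  have hsum_eq : (∑ k ∈ Finset.range (N + 1),
        2 * (inner ℝ (d k) (D k t - (if k = 0 then Dinf0 else 0)) : ℝ))
      = 2 * (-(ρinf / T₀) * (inner ℝ (A (Φ t)) (D 1 t) : ℝ)
          - (1 / τ₀) * ∑ k ∈ Finset.range (N + 1),
            (k : ℝ) * ‖D k t - (if k = 0 then Dinf0 else 0)‖ ^ 2) := by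
    rw [← Finset.mul_sum, Finset.sum_congr rfl hkey, Finset.sum_sub_distrib,
      Finset.sum_sub_distrib, Finset.sum_range_sub c, hcN, hc0, h2,
      Finset.sum_ite_eq' (Finset.range (N + 1)) 1
        (fun _ => (ρinf / T₀) * (inner ℝ (A (Φ t)) (D 1 t) : ℝ)),
      if_pos (by simp only [Finset.mem_range]; omega : (1 : ℕ) ∈ Finset.range (N + 1))]
    ring
  have hEsq : HasDerivAt (fun s => ‖E s‖ ^ 2) (2 * (inner ℝ (deriv E t) (E t) : ℝ)) t :=
    hasDerivAt_norm_sq' (hEdiff t).hasDerivAt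
  have total := (hsum.const_mul (1 / (2 * ρinf))).add (hEsq.const_mul (1 / (2 * T₀)))
  convert total using 1
  case e'_4 => rfl
  case e'_5 => rfl
  case e'_8 => ext s; simp [Finset.sum_apply]
  rw [hsum_eq, hEinner]
  field_simp
  ring
end

section
/- Let A_h be the DG derivative operator with alternating flux ĝ_a(u) = u⁻ on U_h^m. Then for each cell K_j and each u ∈ U_h^m: ‖∂_x u‖_{L²(K_j)} ≤ T₀^{−1/2}·(1 + C_ip(m))·‖A_h u‖_{L²(K_j)}, where C_ip(m) = (m+1)/√(2m+1). Consequently, combined with the jump estimate |[u]_{j−1/2}| ≤ √(C_qu/T₀)·h_{j−1/2}^{1/2}·(2 + C_ip(m))·‖A_h u‖_{L²(K_j)}, the broken seminorm bound |u|_{1,h} ≤ C·T₀^{−1/2}·‖A_h u‖_{L²(𝕋)} holds with C depending only on m and C_qu. -/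
/-- The broken `L²` inner product of two piecewise polynomials on the periodic mesh
given by `node 0 < node 1 < ⋯ < node N` (with `node N` identified with `node 0`). -/
noncomputable def brokenIP (N : ℕ) (node : ℕ → ℝ) (p q : ℕ → Polynomial ℝ) : ℝ :=
  ∑ j ∈ Finset.range N, ∫ x in (node j)..(node (j + 1)), (p j).eval x * (q j).eval x

/-- The broken `L²` norm of a piecewise polynomial. -/
noncomputable def brokenNorm (N : ℕ) (node : ℕ → ℝ) (p : ℕ → Polynomial ℝ) : ℝ :=
  Real.sqrt (brokenIP N node p p)

/-- The jump `[u]_{j−1/2} = u⁺ − u⁻` of a piecewise polynomial at the interface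
`node j`, with periodic wrap-around at `j = 0`. -/
noncomputable def dgJump (N : ℕ) (node : ℕ → ℝ) (u : ℕ → Polynomial ℝ) (j : ℕ) : ℝ :=
  if j = 0 then (u 0).eval (node 0) - (u (N - 1)).eval (node N)
  else (u j).eval (node j) - (u (j - 1)).eval (node j)

/-- The left trace `u⁻` of a piecewise polynomial at the interface `node j`, with
periodic wrap-around at `j = 0`. -/
noncomputable def dgMinus (N : ℕ) (node : ℕ → ℝ) (u : ℕ → Polynomial ℝ) (j : ℕ) : ℝ :=
  if j = 0 then (u (N - 1)).eval (node N) else (u (j - 1)).eval (node j)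

/-- `h_{j−1/2} = min (h_{j−1}, h_j)`, with periodic wrap-around at `j = 0`. -/
noncomputable def hmin (N : ℕ) (node : ℕ → ℝ) (j : ℕ) : ℝ :=
  if j = 0 then min (node N - node (N - 1)) (node 1 - node 0)
  else min (node j - node (j - 1)) (node (j + 1) - node j)

/-- The square of the broken `H¹` seminorm
`|u|²_{1,h} = ‖∂_h u‖²_{L²} + Σ_j h_{j−1/2}⁻¹ [u]²_{j−1/2}`. -/
noncomputable def seminormSq (N : ℕ) (node : ℕ → ℝ) (u : ℕ → Polynomial ℝ) : ℝ :=
  (∑ j ∈ Finset.range N, ∫ x in (node j)..(node (j + 1)), ((u j).derivative.eval x) ^ 2)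
    + ∑ j ∈ Finset.range N, (dgJump N node u j) ^ 2 / hmin N node j

/-- The DG bilinear form `a_h(D, u)` with alternating flux `ĝ_a(D) = D⁻`:
`a_h(D,u) = −√T₀ (Σ_j D⁻_{j−1/2}[u]_{j−1/2} + Σ_j ∫_{K_j} D ∂_x u)`. -/
noncomputable def ahDG (T₀ : ℝ) (N : ℕ) (node : ℕ → ℝ) (D u : ℕ → Polynomial ℝ) : ℝ :=
  -(Real.sqrt T₀) *
    ((∑ j ∈ Finset.range N, dgMinus N node D j * dgJump N node u j)
      + ∑ j ∈ Finset.range N,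
          ∫ x in (node j)..(node (j + 1)), (D j).eval x * ((u j).derivative.eval x))

/-- The `L²` norm of a polynomial on the cell `[node j, node (j+1)]`. -/
noncomputable def cellNorm (node : ℕ → ℝ) (p : Polynomial ℝ) (j : ℕ) : ℝ :=
  Real.sqrt (∫ x in (node j)..(node (j + 1)), (p.eval x) ^ 2)

open Polynomial


noncomputable def pInt (a b : ℝ) (p : ℝ[X]) : ℝ := ∫ x in a..b, p.eval x

lemma pintg (p : ℝ[X]) (a b : ℝ) : IntervalIntegrable (fun x => p.eval x) MeasureTheory.volume a b :=
  p.continuous.intervalIntegrable a b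

lemma pInt_derivative (p : ℝ[X]) (a b : ℝ) : pInt a b p.derivative = p.eval b - p.eval a :=
  intervalIntegral.integral_eq_sub_of_hasDerivAt (fun x _ => p.hasDerivAt x) (pintg _ a b)

lemma pInt_add (a b : ℝ) (p q : ℝ[X]) : pInt a b (p + q) = pInt a b p + pInt a b q := by
  simp only [pInt, eval_add]
  exact intervalIntegral.integral_add (pintg p a b) (pintg q a b)

lemma pInt_C_mul (a b : ℝ) (c : ℝ) (p : ℝ[X]) : pInt a b (C c * p) = c * pInt a b p := by
  simp only [pInt, eval_mul, eval_C]
  exact intervalIntegral.integral_const_mul c _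

lemma pInt_zero (a b : ℝ) : pInt a b 0 = 0 := by simp [pInt]

lemma pInt_neg (a b : ℝ) (p : ℝ[X]) : pInt a b (-p) = - pInt a b p := by
  have := pInt_C_mul a b (-1) p; simpa using this

lemma pInt_sub (a b : ℝ) (p q : ℝ[X]) : pInt a b (p - q) = pInt a b p - pInt a b q := by
  rw [sub_eq_add_neg, pInt_add, pInt_neg]; ring

lemma pInt_sum {ι : Type*} (a b : ℝ) (s : Finset ι) (F : ι → ℝ[X]) :
    pInt a b (∑ i ∈ s, F i) = ∑ i ∈ s, pInt a b (F i) := by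
  induction s using Finset.cons_induction with
  | empty => simp [pInt_zero]
  | cons i s hi ih => rw [Finset.sum_cons, pInt_add, ih, Finset.sum_cons]

lemma pInt_sq_nonneg {a b : ℝ} (hab : a ≤ b) (p : ℝ[X]) : 0 ≤ pInt a b (p * p) := by
  rw [pInt]
  apply intervalIntegral.integral_nonneg hab
  intro x _; simp only [eval_mul]; exact mul_self_nonneg _

/-- Cauchy–Schwarz for the polynomial inner product. -/
lemma pInt_mul_sq_le {a b : ℝ} (hab : a ≤ b) (p q : ℝ[X]) :
    (pInt a b (p * q)) ^ 2 ≤ pInt a b (p * p) * pInt a b (q * q) := by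
  have key : ∀ t : ℝ, 0 ≤ pInt a b (q * q) * (t * t) + (2 * pInt a b (p * q)) * t
      + pInt a b (p * p) := by
    intro t
    have h0 : 0 ≤ pInt a b ((C t * q + p) * (C t * q + p)) := pInt_sq_nonneg hab _
    have hpoly : (C t * q + p) * (C t * q + p)
        = C (t * t) * (q * q) + C (2 * t) * (p * q) + p * p := by
      have : (C (t*t) : ℝ[X]) = C t * C t := by rw [map_mul]
      rw [this]
      have h2 : (C (2*t) : ℝ[X]) = 2 * C t := by
        rw [map_mul, map_ofNat]
      rw [h2]; ring
    rw [hpoly, pInt_add, pInt_add, pInt_C_mul, pInt_C_mul] at h0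
    linarith
  have := discrim_le_zero key
  rw [discrim] at this
  nlinarith [this]

lemma abs_pInt_mul_le {a b : ℝ} (hab : a ≤ b) (p q : ℝ[X]) :
    |pInt a b (p * q)| ≤ Real.sqrt (pInt a b (p * p)) * Real.sqrt (pInt a b (q * q)) := by
  rw [← Real.sqrt_mul_self (abs_nonneg (pInt a b (p*q))) , ← Real.sqrt_mul (pInt_sq_nonneg hab p)]
  apply Real.sqrt_le_sqrt
  calc |pInt a b (p*q)| * |pInt a b (p*q)| = (pInt a b (p*q))^2 := by rw [← abs_mul, abs_mul_self]; ring
  _ ≤ _ := pInt_mul_sq_le hab p q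

/-- Integration by parts. -/
lemma pInt_mul_derivative (a b : ℝ) (p q : ℝ[X]) :
    pInt a b (p * q.derivative)
      = p.eval b * q.eval b - p.eval a * q.eval a - pInt a b (p.derivative * q) := by
  have h := pInt_derivative (p * q) a b
  rw [derivative_mul, pInt_add] at h
  simp only [eval_mul] at h
  linarith


/-- The (unnormalized) Legendre polynomial of degree `n` on `[a,b]`, via Rodrigues' formula. -/
noncomputable def legP (a b : ℝ) (n : ℕ) : ℝ[X] :=
  derivative^[n] ((X - C a) ^ n * (X - C b) ^ n)

lemma dvd_derivative_of_pow_dvd {c : ℝ} {j : ℕ} {q : ℝ[X]} (h : (X - C c) ^ (j+1) ∣ q) :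
    (X - C c) ^ j ∣ q.derivative := by
  obtain ⟨g, rfl⟩ := h
  rw [derivative_mul, derivative_pow]
  apply dvd_add
  · exact Dvd.dvd.mul_right (Dvd.dvd.mul_right (Dvd.dvd.mul_left (by simp) _) _) _
  · exact Dvd.dvd.mul_right (pow_dvd_pow _ (Nat.le_succ j)) _

lemma pow_dvd_iterate_derivative {c : ℝ} {k : ℕ} {q : ℝ[X]} (h : (X - C c) ^ k ∣ q) :
    ∀ i, (X - C c) ^ (k - i) ∣ derivative^[i] q := by
  intro i
  induction i with
  | zero => simpa using h
  | succ i ih =>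
    rw [Function.iterate_succ_apply']
    rcases le_or_gt k i with hki | hik
    · have : k - (i+1) = 0 := by omega
      simp [this]
    · have h1 : (X - C c) ^ (k - i - 1 + 1) ∣ derivative^[i] q := by
        have : k - i - 1 + 1 = k - i := by omega
        rw [this]; exact ih
      have := dvd_derivative_of_pow_dvd h1
      have he : k - (i+1) = k - i - 1 := by omega
      rw [he]; exact this

lemma legP_van_a (a b : ℝ) (n : ℕ) : ∀ i < n,
    (derivative^[i] ((X - C a) ^ n * (X - C b) ^ n)).eval a = 0 := by
  intro i hi
  have h : (X - C a) ^ n ∣ (X - C a) ^ n * (X - C b) ^ n := Dvd.intro _ rfl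
  have := pow_dvd_iterate_derivative h i
  have h1 : (X - C a) ∣ derivative^[i] ((X - C a) ^ n * (X - C b) ^ n) :=
    dvd_trans (dvd_pow_self _ (by omega)) this
  exact eval_eq_zero_of_dvd_of_eval_eq_zero h1 (by simp)

lemma legP_van_b (a b : ℝ) (n : ℕ) : ∀ i < n,
    (derivative^[i] ((X - C a) ^ n * (X - C b) ^ n)).eval b = 0 := by
  intro i hi
  have h : (X - C b) ^ n ∣ (X - C a) ^ n * (X - C b) ^ n := Dvd.intro_left _ rfl
  have := pow_dvd_iterate_derivative h i
  have h1 : (X - C b) ∣ derivative^[i] ((X - C a) ^ n * (X - C b) ^ n) :=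
    dvd_trans (dvd_pow_self _ (by omega)) this
  exact eval_eq_zero_of_dvd_of_eval_eq_zero h1 (by simp)

/-- Iterated integration by parts. -/
lemma ibp_iter (a b : ℝ) (f : ℝ[X]) (n : ℕ)
    (hva : ∀ i < n, (derivative^[i] f).eval a = 0)
    (hvb : ∀ i < n, (derivative^[i] f).eval b = 0) :
    ∀ g : ℝ[X], pInt a b (derivative^[n] f * g) = (-1)^n * pInt a b (f * derivative^[n] g) := by
  induction n with
  | zero => intro g; simp
  | succ n ih =>
    intro g
    have step : pInt a b (derivative^[n+1] f * g) = - pInt a b (derivative^[n] f * g.derivative) := by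
      rw [Function.iterate_succ_apply']
      have h := pInt_mul_derivative a b g (derivative^[n] f)
      have hcomm : g * (derivative^[n] f).derivative = (derivative^[n] f).derivative * g := mul_comm _ _
      rw [hcomm] at h
      rw [h, hva n (by omega), hvb n (by omega)]
      have hc2 : g.derivative * derivative^[n] f = derivative^[n] f * g.derivative := mul_comm _ _
      rw [hc2]; ring
    rw [step, ih (fun i hi => hva i (by omega)) (fun i hi => hvb i (by omega)) g.derivative]
    rw [← Function.iterate_succ_apply]
    ring

lemma legP_orth (a b : ℝ) (n : ℕ) {g : ℝ[X]} (hg : g.natDegree < n) :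
    pInt a b (legP a b n * g) = 0 := by
  rw [legP, ibp_iter a b _ n (legP_van_a a b n) (legP_van_b a b n) g,
    iterate_derivative_eq_zero hg]
  simp [pInt_zero]

lemma natDegree_legP_le (a b : ℝ) (n : ℕ) : (legP a b n).natDegree ≤ n := by
  have h1 : ((X - C a) ^ n * (X - C b) ^ n : ℝ[X]).natDegree ≤ 2 * n := by
    apply (natDegree_mul_le).trans
    have := natDegree_pow (X - C a : ℝ[X]) n
    have := natDegree_pow (X - C b : ℝ[X]) n
    simp [natDegree_X_sub_C] at *; omega
  have := natDegree_iterate_derivative ((X - C a) ^ n * (X - C b) ^ n) n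
  rw [legP]; omega

lemma monic_base (a b : ℝ) (n : ℕ) : ((X - C a) ^ n * (X - C b) ^ n : ℝ[X]).Monic :=
  ((monic_X_sub_C a).pow n).mul ((monic_X_sub_C b).pow n)

lemma natDegree_base (a b : ℝ) (n : ℕ) :
    ((X - C a) ^ n * (X - C b) ^ n : ℝ[X]).natDegree = 2 * n := by
  rw [(((monic_X_sub_C a).pow n)).natDegree_mul (((monic_X_sub_C b).pow n))]
  simp [natDegree_pow, natDegree_X_sub_C]; ring

lemma coeff_legP (a b : ℝ) (n : ℕ) : (legP a b n).coeff n = (2*n).descFactorial n := by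
  rw [legP, coeff_iterate_derivative]
  have h2 : n + n = 2*n := by ring
  rw [h2]
  have : ((X - C a) ^ n * (X - C b) ^ n : ℝ[X]).coeff (2*n) = 1 := by
    have := (monic_base a b n)
    have hd := natDegree_base a b n
    rw [← hd]; exact this.coeff_natDegree
  rw [this]; simp

lemma iterate_derivative_legP (a b : ℝ) (n : ℕ) :
    derivative^[n] (legP a b n) = C ((2*n).factorial : ℝ) := by
  rw [legP, ← Function.iterate_add_apply]
  have hdeg : (derivative^[n + n] ((X - C a) ^ n * (X - C b) ^ n)).natDegree = 0 := by
    have := natDegree_iterate_derivative ((X - C a) ^ n * (X - C b) ^ n) (n+n)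
    rw [natDegree_base] at this; omega
  have := Polynomial.eq_C_of_natDegree_le_zero (le_of_eq hdeg)
  rw [this, coeff_iterate_derivative]
  have hc : ((X - C a) ^ n * (X - C b) ^ n : ℝ[X]).coeff (2*n) = 1 := by
    have hd := natDegree_base a b n
    rw [← hd]; exact (monic_base a b n).coeff_natDegree
  have h2 : 0 + (n + n) = 2 * n := by omega
  rw [h2, hc]
  have h3 : n + n = 2 * n := by omega
  rw [h3, Nat.descFactorial_self]
  simp

lemma iterate_derivative_pow_mul_eval (c : ℝ) :
    ∀ (n : ℕ) (h : ℝ[X]), (derivative^[n] ((X - C c) ^ n * h)).eval c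
      = (n.factorial : ℝ) * h.eval c := by
  intro n
  induction n with
  | zero => intro h; simp
  | succ n ih =>
    intro h
    rw [Function.iterate_succ_apply]
    have key : derivative ((X - C c) ^ (n+1) * h)
        = (X - C c) ^ n * (C ((n:ℝ)+1) * h + (X - C c) * h.derivative) := by
      rw [derivative_mul, derivative_pow, derivative_sub, derivative_X, derivative_C,
        Nat.add_sub_cancel]
      push_cast
      ring
    rw [key, ih]
    simp only [eval_add, eval_mul, eval_C, eval_sub, eval_X, Nat.factorial_succ]
    push_cast
    ring

lemma pInt_pow (a b : ℝ) (p : ℕ) : pInt a b ((X - C a)^p) = (b - a)^(p+1) / (p+1) := by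
  have hne : ((p:ℝ)+1) ≠ 0 := by positivity
  have hd : (C (1/((p:ℝ)+1)) * (X - C a)^(p+1)).derivative = (X - C a)^p := by
    rw [derivative_C_mul, derivative_pow, derivative_sub, derivative_X, derivative_C,
      Nat.add_sub_cancel]
    rw [sub_zero, mul_one, ← mul_assoc, ← C_mul]
    push_cast
    rw [one_div, inv_mul_cancel₀ hne]
    simp
  rw [← hd, pInt_derivative]
  simp only [eval_mul, eval_C, eval_pow, eval_sub, eval_X, sub_self]
  rw [zero_pow (by omega)]
  field_simp
  ring

lemma pInt_pow_pow (a b : ℝ) : ∀ (q p : ℕ), pInt a b ((X - C a)^p * (X - C b)^q)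
    = (-1)^q * ((p.factorial : ℝ) * q.factorial / (p+q+1).factorial) * (b-a)^(p+q+1) := by
  intro q
  induction q with
  | zero =>
    intro p
    rw [pow_zero, mul_one, pInt_pow]
    rw [Nat.add_zero, Nat.factorial_succ]
    push_cast
    have : (p.factorial : ℝ) ≠ 0 := by positivity
    field_simp
    ring
  | succ q ih =>
    intro p
    have hdu : ((X - C a)^(p+1) : ℝ[X]).derivative = C ((p:ℝ)+1) * (X - C a)^p := by
      rw [derivative_pow, derivative_sub, derivative_X, derivative_C, Nat.add_sub_cancel]
      push_cast; ring
    have hdv : ((X - C b)^(q+1) : ℝ[X]).derivative = C ((q:ℝ)+1) * (X - C b)^q := by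
      rw [derivative_pow, derivative_sub, derivative_X, derivative_C, Nat.add_sub_cancel]
      push_cast; ring
    have key : pInt a b ((X - C b)^(q+1) * ((X - C a)^(p+1)).derivative)
        = - pInt a b (((X - C b)^(q+1)).derivative * (X - C a)^(p+1)) := by
      rw [pInt_mul_derivative]
      simp only [eval_pow, eval_sub, eval_X, eval_C, sub_self]
      rw [zero_pow (by omega), zero_pow (by omega)]
      ring
    rw [hdu, hdv] at key
    have hl : (X - C b : ℝ[X])^(q+1) * (C ((p:ℝ)+1) * (X - C a)^p)
        = C ((p:ℝ)+1) * ((X - C a)^p * (X - C b)^(q+1)) := by ring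
    have hr : (C ((q:ℝ)+1) * (X - C b)^q) * (X - C a)^(p+1)
        = C ((q:ℝ)+1) * ((X - C a)^(p+1) * (X - C b)^q) := by ring
    rw [hl, hr, pInt_C_mul, pInt_C_mul] at key
    have hp1 : ((p:ℝ)+1) ≠ 0 := by positivity
    have step : pInt a b ((X - C a)^p * (X - C b)^(q+1))
        = -(((q:ℝ)+1)/((p:ℝ)+1)) * pInt a b ((X - C a)^(p+1) * (X - C b)^q) := by
      field_simp
      linarith [key]
    rw [step, ih (p+1)]
    have he : p + 1 + q + 1 = p + (q+1) + 1 := by omega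
    rw [he]
    rw [Nat.factorial_succ q, Nat.factorial_succ p]
    have hfne : ((p + (q+1) + 1).factorial : ℝ) ≠ 0 := by positivity
    push_cast
    field_simp
    ring

lemma legP_eval_a (a b : ℝ) (n : ℕ) : (legP a b n).eval a = (n.factorial : ℝ) * (a - b)^n := by
  rw [legP]
  have := iterate_derivative_pow_mul_eval a n ((X - C b)^n)
  simpa [eval_pow] using this

lemma legP_norm (a b : ℝ) (n : ℕ) :
    pInt a b (legP a b n * legP a b n)
      = (n.factorial : ℝ)^2 * (b-a)^(2*n+1) / (2*(n:ℝ)+1) := by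
  have h := ibp_iter a b ((X - C a)^n * (X - C b)^n) n (legP_van_a a b n) (legP_van_b a b n)
    (legP a b n)
  rw [show derivative^[n] ((X - C a)^n * (X - C b)^n) = legP a b n from rfl] at h
  rw [h, iterate_derivative_legP, mul_comm ((X - C a)^n * (X - C b)^n), pInt_C_mul,
    pInt_pow_pow a b n n]
  have he : n + n + 1 = 2*n + 1 := by omega
  rw [he]
  have h1 : ((2*n+1).factorial : ℝ) = (2*(n:ℝ)+1) * (2*n).factorial := by
    rw [Nat.factorial_succ]; push_cast; ring
  rw [h1]
  have h2 : ((2*n).factorial : ℝ) ≠ 0 := by positivity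
  have h3 : (2*(n:ℝ)+1) ≠ 0 := by positivity
  have h4 : ((-1 : ℝ))^n * (-1:ℝ)^n = 1 := by
    rw [← pow_add]
    exact Even.neg_one_pow ⟨n, by ring⟩
  calc (-1:ℝ)^n * (((2*n).factorial : ℝ) * ((-1)^n * ((n.factorial:ℝ) * n.factorial
          / ((2*(n:ℝ)+1) * (2*n).factorial)) * (b-a)^(2*n+1)))
      = ((-1:ℝ)^n * (-1)^n) * (((2*n).factorial : ℝ) * ((n.factorial:ℝ) * n.factorial)
          * (b-a)^(2*n+1) / ((2*(n:ℝ)+1) * (2*n).factorial)) := by ring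
    _ = (n.factorial : ℝ)^2 * (b-a)^(2*n+1) / (2*(n:ℝ)+1) := by
        rw [h4, one_mul]; field_simp

lemma coeff_legP_ne (n : ℕ) : ((2*n).descFactorial n : ℝ) ≠ 0 := by
  have h : (2*n).descFactorial n ≠ 0 := by
    rw [Ne, Nat.descFactorial_eq_zero_iff_lt]; omega
  exact_mod_cast h

lemma legP_span (a b : ℝ) : ∀ (k : ℕ) (p : ℝ[X]), p.natDegree ≤ k →
    ∃ c : ℕ → ℝ, p = ∑ i ∈ Finset.range (k+1), C (c i) * legP a b i := by
  intro k
  induction k with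
  | zero =>
    intro p hp
    refine ⟨fun _ => p.coeff 0, ?_⟩
    rw [Finset.sum_range_one]
    have : legP a b 0 = 1 := by simp [legP]
    rw [this, mul_one]
    exact Polynomial.eq_C_of_natDegree_le_zero hp
  | succ k ih =>
    intro p hp
    set d := p.coeff (k+1) / ((2*(k+1)).descFactorial (k+1) : ℝ) with hd
    set q := p - C d * legP a b (k+1) with hq
    have hql : q.natDegree ≤ k := by
      rw [Polynomial.natDegree_le_iff_coeff_eq_zero]
      intro j hj
      rcases eq_or_lt_of_le (Nat.succ_le_of_lt hj) with hj1 | hj2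
      · rw [hq]
        simp only [coeff_sub, coeff_C_mul]
        rw [← hj1]
        simp only [Nat.succ_eq_add_one]
        rw [coeff_legP, hd, div_mul_cancel₀ _ (coeff_legP_ne (k+1)), sub_self]
      · rw [hq]
        simp only [coeff_sub, coeff_C_mul]
        rw [Polynomial.coeff_eq_zero_of_natDegree_lt (by omega : p.natDegree < j),
          Polynomial.coeff_eq_zero_of_natDegree_lt
            (by have := natDegree_legP_le a b (k+1); omega : (legP a b (k+1)).natDegree < j)]
        ring
    obtain ⟨c, hc⟩ := ih q hql
    refine ⟨fun i => if i = k+1 then d else c i, ?_⟩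
    have hfin : ∑ i ∈ Finset.range (k+2), C (if i = k+1 then d else c i) * legP a b i
        = (∑ i ∈ Finset.range (k+1), C (c i) * legP a b i) + C d * legP a b (k+1) := by
      rw [Finset.sum_range_succ, if_pos rfl]
      congr 1
      apply Finset.sum_congr rfl
      intro i hi
      rw [if_neg (by have := Finset.mem_range.mp hi; omega)]
    show p = ∑ i ∈ Finset.range (k+2), C (if i = k+1 then d else c i) * legP a b i
    rw [hfin, ← hc, hq]
    ring

lemma sum_odd (n : ℕ) : ∑ i ∈ Finset.range n, (2*(i:ℝ)+1) = (n:ℝ)^2 := by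
  induction n with
  | zero => simp
  | succ n ih => rw [Finset.sum_range_succ, ih]; push_cast; ring

/-- Endpoint trace estimate. -/
lemma trace_est {a b : ℝ} (hab : a < b) (k : ℕ) (p : ℝ[X]) (hp : p.natDegree ≤ k) :
    p.eval a ^ 2 ≤ ((k:ℝ)+1)^2 / (b - a) * pInt a b (p * p) := by
  obtain ⟨c, hc⟩ := legP_span a b k p hp
  set s := Finset.range (k+1) with hs
  have hpos : (0:ℝ) < b - a := by linarith
  have expand : pInt a b (p * p)
      = ∑ i ∈ s, ∑ j ∈ s, c i * c j * pInt a b (legP a b i * legP a b j) := by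
    nth_rewrite 1 [hc]; nth_rewrite 1 [hc]
    rw [Finset.sum_mul_sum, pInt_sum]
    apply Finset.sum_congr rfl
    intro i _
    rw [pInt_sum]
    apply Finset.sum_congr rfl
    intro j _
    have h1 : (C (c i) * legP a b i) * (C (c j) * legP a b j)
        = C (c i) * (C (c j) * (legP a b i * legP a b j)) := by ring
    rw [h1, pInt_C_mul, pInt_C_mul]
    ring
  have hdiag : pInt a b (p * p) = ∑ i ∈ s, (c i)^2 * pInt a b (legP a b i * legP a b i) := by
    rw [expand]
    apply Finset.sum_congr rfl
    intro i hi
    rw [Finset.sum_eq_single i]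
    · ring
    · intro j hj hji
      rcases lt_or_gt_of_ne hji with h1 | h1
      · rw [legP_orth a b i (lt_of_le_of_lt (natDegree_legP_le a b j) h1)]
        ring
      · rw [mul_comm (legP a b i), legP_orth a b j (lt_of_le_of_lt (natDegree_legP_le a b i) h1)]
        ring
    · intro h; exact absurd hi h
  have heval : p.eval a = ∑ i ∈ s, c i * (legP a b i).eval a := by
    rw [hc]
    rw [Polynomial.eval_finset_sum]
    apply Finset.sum_congr rfl
    intro i _
    simp
  have hCS := Finset.sum_mul_sq_le_sq_mul_sq s (fun i => Real.sqrt (2*(i:ℝ)+1))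
    (fun i => c i * (legP a b i).eval a / Real.sqrt (2*(i:ℝ)+1))
  have hterm : ∀ i : ℕ, Real.sqrt (2*(i:ℝ)+1) * (c i * (legP a b i).eval a / Real.sqrt (2*(i:ℝ)+1))
      = c i * (legP a b i).eval a := by
    intro i
    have : Real.sqrt (2*(i:ℝ)+1) ≠ 0 := by
      refine ne_of_gt (Real.sqrt_pos.mpr (by positivity))
    field_simp
  have hsq1 : ∀ i : ℕ, (Real.sqrt (2*(i:ℝ)+1))^2 = 2*(i:ℝ)+1 := fun i =>
    Real.sq_sqrt (by positivity)
  have hsq2 : ∀ i : ℕ, (c i * (legP a b i).eval a / Real.sqrt (2*(i:ℝ)+1))^2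
      = (c i)^2 * pInt a b (legP a b i * legP a b i) / (b - a) := by
    intro i
    rw [div_pow, hsq1 i, legP_norm, legP_eval_a]
    have h1 : ((a-b)^i)^2 = (b-a)^(2*i) := by
      have e1 : ((a-b)^i)^2 = ((a-b)^2)^i := by rw [← pow_mul, ← pow_mul, mul_comm]
      rw [e1, show ((a-b)^2 : ℝ) = (b-a)^2 from by ring, ← pow_mul]
    have h2 : (b-a)^(2*i+1) = (b-a)^(2*i) * (b-a) := by ring
    rw [mul_pow, mul_pow, h1, h2]
    have h3 : (2*(i:ℝ)+1) ≠ 0 := by positivity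
    have h4 : (b-a) ≠ 0 := ne_of_gt hpos
    field_simp
  simp only [hterm] at hCS
  simp only [hsq1, hsq2] at hCS
  rw [← heval] at hCS
  rw [sum_odd] at hCS
  have hdivsum : ∑ i ∈ s, (c i)^2 * pInt a b (legP a b i * legP a b i) / (b - a)
      = pInt a b (p * p) / (b - a) := by
    rw [← Finset.sum_div, ← hdiag]
  rw [hdivsum] at hCS
  have hcast : ((k+1 : ℕ) : ℝ) = (k:ℝ)+1 := by push_cast; ring
  rw [hcast] at hCS
  calc p.eval a ^ 2 ≤ ((k:ℝ)+1)^2 * (pInt a b (p*p) / (b-a)) := hCS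
  _ = ((k:ℝ)+1)^2 / (b - a) * pInt a b (p * p) := by ring

lemma pInt_eq (a b : ℝ) (p q : ℝ[X]) :
    (∫ x in a..b, p.eval x * q.eval x) = pInt a b (p * q) := by
  simp [pInt, eval_mul]

lemma pInt_eq_sq (a b : ℝ) (p : ℝ[X]) :
    (∫ x in a..b, (p.eval x) ^ 2) = pInt a b (p * p) := by
  simp [pInt, eval_mul, sq]

lemma cellNorm_eq (node : ℕ → ℝ) (p : ℝ[X]) (j : ℕ) :
    cellNorm node p j = Real.sqrt (pInt (node j) (node (j+1)) (p * p)) := by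
  rw [cellNorm, pInt_eq_sq]

lemma dgJump_eq (N : ℕ) (node : ℕ → ℝ) (u : ℕ → Polynomial ℝ) (j : ℕ) :
    dgJump N node u j = (u j).eval (node j) - dgMinus N node u j := by
  rw [dgJump, dgMinus]
  split_ifs with h
  · subst h; rfl
  · rfl

/-- The key identity obtained by testing against a single-cell function. -/
lemma dg_key (T₀ : ℝ) (N : ℕ) (m : ℕ) (node : ℕ → ℝ) (u w : ℕ → Polynomial ℝ)
    (hN : 0 < N)
    (hRiesz : ∀ v : ℕ → Polynomial ℝ, (∀ j, (v j).degree ≤ m) →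
      brokenIP N node w v = ahDG T₀ N node u v)
    (j : ℕ) (hj : j < N) (r : Polynomial ℝ) (hr : r.degree ≤ m) :
    pInt (node j) (node (j+1)) (w j * r)
      = Real.sqrt T₀ * (dgJump N node u j * r.eval (node j)
          + pInt (node j) (node (j+1)) ((u j).derivative * r)) := by
  classical
  set v : ℕ → ℝ[X] := fun k => if k = j then r else 0 with hv
  have hvj : v j = r := by simp [hv]
  have hvk : ∀ k, k ≠ j → v k = 0 := by intro k hk; simp [hv, hk]
  have hvdeg : ∀ k, (v k).degree ≤ m := by
    intro k
    by_cases h : k = j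
    · rw [h, hvj]; exact hr
    · rw [hvk k h]; simp
  have h := hRiesz v hvdeg
  have hjmem : j ∈ Finset.range N := Finset.mem_range.mpr hj
  have hbip : brokenIP N node w v = pInt (node j) (node (j+1)) (w j * r) := by
    rw [brokenIP, Finset.sum_eq_single j]
    · rw [hvj, pInt_eq]
    · intro k _ hkj
      rw [hvk k hkj]; simp
    · intro hmem; exact absurd hjmem hmem
  have hS2 : (∑ k ∈ Finset.range N,
      ∫ x in (node k)..(node (k + 1)), (u k).eval x * ((v k).derivative.eval x))
      = pInt (node j) (node (j+1)) (u j * r.derivative) := by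
    rw [Finset.sum_eq_single j]
    · rw [hvj, pInt_eq]
    · intro k _ hkj
      rw [hvk k hkj]; simp
    · intro hmem; exact absurd hjmem hmem
  have hS1 : (∑ k ∈ Finset.range N, dgMinus N node u k * dgJump N node v k)
      = dgMinus N node u j * r.eval (node j)
        - (u j).eval (node (j+1)) * r.eval (node (j+1)) := by
    have hpt : ∀ k ∈ Finset.range N, dgMinus N node u k * dgJump N node v k
        = (if k = j then dgMinus N node u j * r.eval (node j) else 0)
          + (if k = (j+1) % N then -((u j).eval (node (j+1)) * r.eval (node (j+1))) else 0) := by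
      intro k hk
      rw [Finset.mem_range] at hk
      by_cases hk0 : k = 0
      · subst hk0
        by_cases hN1 : N = 1
        · subst hN1
          have hj0 : j = 0 := by omega
          subst hj0
          rw [if_pos rfl, if_pos (show (0:ℕ) = (0+1) % 1 by norm_num)]
          rw [dgJump, if_pos rfl, dgMinus, if_pos rfl]
          rw [show (1:ℕ) - 1 = 0 from rfl, hvj]
          simp only [Nat.zero_add]
          ring
        · rcases eq_or_ne j 0 with hj0 | hj0
          · subst hj0
            rw [if_pos rfl, if_neg (show (0:ℕ) ≠ (0+1) % N by
                rw [Nat.mod_eq_of_lt (by omega)]; omega)]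
            rw [dgJump, if_pos rfl, hvj, hvk (N-1) (by omega)]
            simp
          · rcases eq_or_ne j (N-1) with hjN | hjN
            · rw [if_neg (show (0:ℕ) ≠ j from by omega),
                if_pos (show (0:ℕ) = (j+1) % N by rw [show j+1 = N from by omega, Nat.mod_self])]
              rw [dgJump, if_pos rfl, dgMinus, if_pos rfl]
              rw [hvk 0 (by omega), show N - 1 = j from by omega, hvj,
                show N = j + 1 from by omega]
              simp
            · rw [if_neg (show (0:ℕ) ≠ j from by omega),
                if_neg (show (0:ℕ) ≠ (j+1) % N by
                  rcases eq_or_ne (j+1) N with he | he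
                  · omega
                  · rw [Nat.mod_eq_of_lt (by omega)]; omega)]
              rw [dgJump, if_pos rfl, hvk 0 (by omega), hvk (N-1) (by omega)]
              simp
      · rcases eq_or_ne k j with hkj | hkj
        · subst hkj
          rw [if_pos rfl, if_neg (show k ≠ (k+1) % N from by
              rcases eq_or_ne (k+1) N with he | he
              · rw [he, Nat.mod_self]; omega
              · rw [Nat.mod_eq_of_lt (by omega)]; omega)]
          rw [dgJump, if_neg hk0, hvj, hvk (k-1) (by omega)]
          simp
        · rcases eq_or_ne k (j+1) with hkj1 | hkj1
          · subst hkj1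
            rw [if_neg hkj, if_pos (show j+1 = (j+1) % N from by
                rw [Nat.mod_eq_of_lt (by omega)])]
            rw [dgJump, if_neg hk0, hvk (j+1) hkj, show j + 1 - 1 = j from by omega, hvj]
            rw [dgMinus, if_neg hk0, show j + 1 - 1 = j from by omega]
            simp
          · rw [if_neg hkj, if_neg (show k ≠ (j+1) % N from by
                rcases eq_or_ne (j+1) N with he | he
                · rw [he, Nat.mod_self]; omega
                · rw [Nat.mod_eq_of_lt (by omega)]; omega)]
            rw [dgJump, if_neg hk0, hvk k hkj, hvk (k-1) (by omega)]
            simp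
    rw [Finset.sum_congr rfl hpt, Finset.sum_add_distrib,
      Finset.sum_ite_eq' (Finset.range N) j, Finset.sum_ite_eq' (Finset.range N) ((j+1) % N),
      if_pos hjmem, if_pos (Finset.mem_range.mpr (Nat.mod_lt _ hN))]
    ring
  rw [hbip, ahDG, hS1, hS2] at h
  rw [h, pInt_mul_derivative, dgJump_eq]
  ring

lemma degree_C_mul_le' (c : ℝ) (p : ℝ[X]) : (C c * p).degree ≤ p.degree :=
  (degree_mul_le _ _).trans ((add_le_add degree_C_le le_rfl).trans (by rw [zero_add]))

/-- The cell derivative estimate, abstract version. -/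
lemma deriv_est {T₀ a b : ℝ} (hT : 0 < T₀) (hab : a < b) (m : ℕ) (hm : m ≠ 0)
    (J : ℝ) (e wj : ℝ[X])
    (hdege : e.natDegree ≤ m - 1) (hdege' : e.degree ≤ (m : WithBot ℕ))
    (hkey : ∀ r : ℝ[X], r.degree ≤ (m : WithBot ℕ) →
      pInt a b (wj * r) = Real.sqrt T₀ * (J * r.eval a + pInt a b (e * r))) :
    Real.sqrt (pInt a b (e * e))
      ≤ (Real.sqrt T₀)⁻¹ * (((m:ℝ)+1) / Real.sqrt (2*(m:ℝ)+1))
        * Real.sqrt (pInt a b (wj * wj)) := by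
  have hm1 : 1 ≤ m := by omega
  set P := legP a b m with hP
  set Cip : ℝ := ((m:ℝ)+1) / Real.sqrt (2*(m:ℝ)+1) with hCip
  have h2m : (0:ℝ) < 2*(m:ℝ)+1 := by positivity
  have hCip0 : 0 ≤ Cip := by positivity
  have hPa : P.eval a = (m.factorial : ℝ) * (a-b)^m := legP_eval_a a b m
  have hPane : P.eval a ≠ 0 := by
    rw [hPa]
    apply mul_ne_zero (by positivity)
    exact pow_ne_zero _ (sub_ne_zero.mpr (ne_of_lt hab))
  set r : ℝ[X] := C (P.eval a) * e - C (e.eval a) * P with hr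
  have hrdeg : r.degree ≤ (m : WithBot ℕ) := by
    apply (degree_sub_le _ _).trans
    apply max_le ((degree_C_mul_le' _ _).trans hdege')
      ((degree_C_mul_le' _ _).trans (natDegree_le_iff_degree_le.mp (natDegree_legP_le a b m)))
  have hra : r.eval a = 0 := by rw [hr]; simp; ring
  have horth : pInt a b (P * e) = 0 := legP_orth a b m (by omega)
  set E := pInt a b (e * e) with hE
  set W := pInt a b (wj * wj) with hW
  have hE0 : 0 ≤ E := pInt_sq_nonneg hab.le e
  have hW0 : 0 ≤ W := pInt_sq_nonneg hab.le wj
  have her : pInt a b (e * r) = P.eval a * E := by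
    have hexp : e * r = C (P.eval a) * (e * e) - C (e.eval a) * (P * e) := by rw [hr]; ring
    rw [hexp, pInt_sub, pInt_C_mul, pInt_C_mul, horth, ← hE]; ring
  have hkeyv : pInt a b (wj * r) = Real.sqrt T₀ * (P.eval a * E) := by
    rw [hkey r hrdeg, hra, her]; ring
  have hrr : pInt a b (r * r) = (P.eval a)^2 * E + (e.eval a)^2 * pInt a b (P * P) := by
    have hexp : r * r = C (P.eval a * P.eval a) * (e * e)
        - C (2 * (P.eval a * e.eval a)) * (P * e) + C (e.eval a * e.eval a) * (P * P) := by
      simp only [map_mul, map_ofNat, hr]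
      ring
    rw [hexp, pInt_add, pInt_sub, pInt_C_mul, pInt_C_mul, pInt_C_mul, horth, ← hE]; ring
  have htr : (e.eval a)^2 ≤ ((m:ℝ))^2/(b-a) * E := by
    have h := trace_est hab (m-1) e hdege
    have hc : ((m-1 : ℕ) : ℝ) + 1 = (m:ℝ) := by
      rw [Nat.cast_sub hm1]; push_cast; ring
    rw [hc] at h
    exact h
  have hPP : pInt a b (P * P) = (b-a)/(2*(m:ℝ)+1) * (P.eval a)^2 := by
    rw [legP_norm, hPa]
    have hev : ((a-b)^m)^2 = (b-a)^(2*m) := by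
      have e1 : ((a-b)^m)^2 = ((a-b)^2)^m := by rw [← pow_mul, ← pow_mul, mul_comm]
      rw [e1, show ((a-b)^2 : ℝ) = (b-a)^2 from by ring, ← pow_mul]
    rw [mul_pow, hev, show (b-a)^(2*m+1) = (b-a)^(2*m) * (b-a) from by ring]
    field_simp
  have hba : (0:ℝ) < b - a := by linarith
  have h1 : (e.eval a)^2 * pInt a b (P * P) ≤ ((m:ℝ)^2/(2*(m:ℝ)+1)) * E * (P.eval a)^2 := by
    rw [hPP]
    calc (e.eval a)^2 * ((b-a)/(2*(m:ℝ)+1) * (P.eval a)^2)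
        ≤ ((m:ℝ)^2/(b-a) * E) * ((b-a)/(2*(m:ℝ)+1) * (P.eval a)^2) :=
          mul_le_mul_of_nonneg_right htr (by positivity)
      _ = ((m:ℝ)^2/(2*(m:ℝ)+1)) * E * (P.eval a)^2 := by field_simp
  have hR : pInt a b (r * r) ≤ (P.eval a)^2 * E * (((m:ℝ)+1)^2/(2*(m:ℝ)+1)) := by
    have h2 : (P.eval a)^2 * E + ((m:ℝ)^2/(2*(m:ℝ)+1)) * E * (P.eval a)^2
        = (P.eval a)^2 * E * (((m:ℝ)+1)^2/(2*(m:ℝ)+1)) := by field_simp; ring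
    rw [hrr]; linarith
  have hsqrtrr : Real.sqrt (pInt a b (r * r)) ≤ |P.eval a| * Real.sqrt E * Cip := by
    have hX : (|P.eval a| * Real.sqrt E * Cip)^2 = (P.eval a)^2 * E * (((m:ℝ)+1)^2/(2*(m:ℝ)+1)) := by
      rw [hCip, mul_pow, mul_pow, div_pow, sq_abs, Real.sq_sqrt hE0,
        Real.sq_sqrt (le_of_lt h2m)]
    calc Real.sqrt (pInt a b (r * r))
        ≤ Real.sqrt ((P.eval a)^2 * E * (((m:ℝ)+1)^2/(2*(m:ℝ)+1))) := Real.sqrt_le_sqrt hR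
      _ = Real.sqrt ((|P.eval a| * Real.sqrt E * Cip)^2) := by rw [hX]
      _ = |P.eval a| * Real.sqrt E * Cip := Real.sqrt_sq (by positivity)
  have hCS := abs_pInt_mul_le hab.le wj r
  rw [hkeyv] at hCS
  have habs : |Real.sqrt T₀ * (P.eval a * E)| = Real.sqrt T₀ * |P.eval a| * E := by
    rw [abs_mul, abs_mul, abs_of_nonneg (Real.sqrt_nonneg _), abs_of_nonneg hE0]; ring
  rw [habs] at hCS
  have key2 : Real.sqrt T₀ * |P.eval a| * E
      ≤ Real.sqrt W * (|P.eval a| * Real.sqrt E * Cip) :=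
    hCS.trans (mul_le_mul_of_nonneg_left hsqrtrr (Real.sqrt_nonneg _))
  rcases eq_or_lt_of_le hE0 with hE0' | hEpos
  · rw [← hE0', Real.sqrt_zero]
    positivity
  · have hsE : 0 < Real.sqrt E := Real.sqrt_pos.mpr hEpos
    have hEE : Real.sqrt E * Real.sqrt E = E := Real.mul_self_sqrt hE0
    have h3 : (Real.sqrt T₀ * Real.sqrt E) * (|P.eval a| * Real.sqrt E)
        ≤ (Cip * Real.sqrt W) * (|P.eval a| * Real.sqrt E) := by
      calc (Real.sqrt T₀ * Real.sqrt E) * (|P.eval a| * Real.sqrt E)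
          = Real.sqrt T₀ * |P.eval a| * (Real.sqrt E * Real.sqrt E) := by ring
        _ = Real.sqrt T₀ * |P.eval a| * E := by rw [hEE]
        _ ≤ Real.sqrt W * (|P.eval a| * Real.sqrt E * Cip) := key2
        _ = (Cip * Real.sqrt W) * (|P.eval a| * Real.sqrt E) := by ring
    have h4 : Real.sqrt T₀ * Real.sqrt E ≤ Cip * Real.sqrt W :=
      le_of_mul_le_mul_right h3 (by positivity)
    have hT' : (0:ℝ) < Real.sqrt T₀ := Real.sqrt_pos.mpr hT
    calc Real.sqrt E = (Real.sqrt T₀)⁻¹ * (Real.sqrt T₀ * Real.sqrt E) := by field_simp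
      _ ≤ (Real.sqrt T₀)⁻¹ * (Cip * Real.sqrt W) :=
          mul_le_mul_of_nonneg_left h4 (by positivity)
      _ = (Real.sqrt T₀)⁻¹ * Cip * Real.sqrt W := by ring

/-- The jump estimate, abstract version. -/
lemma jump_est {T₀ a b : ℝ} (hT : 0 < T₀) (hab : a < b) (m : ℕ)
    (J : ℝ) (e wj : ℝ[X])
    (hkey : ∀ r : ℝ[X], r.degree ≤ (m : WithBot ℕ) →
      pInt a b (wj * r) = Real.sqrt T₀ * (J * r.eval a + pInt a b (e * r)))
    (hder : Real.sqrt (pInt a b (e * e))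
      ≤ (Real.sqrt T₀)⁻¹ * (((m:ℝ)+1) / Real.sqrt (2*(m:ℝ)+1)) * Real.sqrt (pInt a b (wj * wj))) :
    |J| ≤ (Real.sqrt T₀)⁻¹ * Real.sqrt (b-a)
        * (1 + ((m:ℝ)+1) / Real.sqrt (2*(m:ℝ)+1)) * Real.sqrt (pInt a b (wj * wj)) := by
  set Cip : ℝ := ((m:ℝ)+1) / Real.sqrt (2*(m:ℝ)+1) with hCip
  have hCip0 : 0 ≤ Cip := by positivity
  set E := pInt a b (e * e) with hE
  set W := pInt a b (wj * wj) with hW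
  have hE0 : 0 ≤ E := pInt_sq_nonneg hab.le e
  have hW0 : 0 ≤ W := pInt_sq_nonneg hab.le wj
  have hT' : (0:ℝ) < Real.sqrt T₀ := Real.sqrt_pos.mpr hT
  have hone : (1 : ℝ[X]).degree ≤ (m : WithBot ℕ) := by
    rw [degree_one]
    exact_mod_cast Nat.zero_le m
  have hkey1 := hkey 1 hone
  rw [mul_one, eval_one, mul_one] at hkey1
  have hint1 : pInt a b (1 : ℝ[X]) = b - a := by
    have : (1 : ℝ[X]) = derivative (X : ℝ[X]) := by rw [derivative_X]
    rw [this, pInt_derivative]; simp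
  have hJ : J = (Real.sqrt T₀)⁻¹ * pInt a b wj - pInt a b (e * 1) := by
    rw [hkey1]; field_simp; ring
  have hb1 : |pInt a b wj| ≤ Real.sqrt W * Real.sqrt (b-a) := by
    have := abs_pInt_mul_le hab.le wj 1
    rwa [mul_one, one_mul, hint1, ← hW] at this
  have hb2 : |pInt a b (e * 1)| ≤ Real.sqrt E * Real.sqrt (b-a) := by
    have := abs_pInt_mul_le hab.le e 1
    rwa [one_mul, hint1, ← hE] at this
  have hsE : Real.sqrt E ≤ (Real.sqrt T₀)⁻¹ * Cip * Real.sqrt W := hder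
  calc |J| ≤ (Real.sqrt T₀)⁻¹ * |pInt a b wj| + |pInt a b (e * 1)| := by
        rw [hJ]
        refine (abs_sub _ _).trans ?_
        rw [abs_mul, abs_of_nonneg (by positivity : (0:ℝ) ≤ (Real.sqrt T₀)⁻¹)]
    _ ≤ (Real.sqrt T₀)⁻¹ * (Real.sqrt W * Real.sqrt (b-a))
          + ((Real.sqrt T₀)⁻¹ * Cip * Real.sqrt W) * Real.sqrt (b-a) := by
        have t1 := mul_le_mul_of_nonneg_left hb1 (by positivity : (0:ℝ) ≤ (Real.sqrt T₀)⁻¹)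

        have t2 : |pInt a b (e * 1)| ≤ ((Real.sqrt T₀)⁻¹ * Cip * Real.sqrt W) * Real.sqrt (b-a) :=
          hb2.trans (mul_le_mul_of_nonneg_right hsE (Real.sqrt_nonneg _))
        linarith
    _ = (Real.sqrt T₀)⁻¹ * Real.sqrt (b-a) * (1 + Cip) * Real.sqrt W := by ring

/-- Inverse estimate for the DG derivative operator with alternating flux `ĝ_a(u) = u⁻`:
cell-by-cell bounds for `‖∂_x u‖_{L²(K_j)}` and the jumps, and the global broken
seminorm bound `|u|_{1,h} ≤ C T₀^{−1/2} ‖A_h u‖_{L²}` with `C` depending only on `m`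
and `C_qu`.  Here `C_ip(m) = (m+1)/√(2m+1)` and `w` denotes the Riesz representative
`A_h u` of `v ↦ a_h(u, v)` in `U_h^m`. -/
theorem dg_operator_inverse_estimate (m : ℕ) (Cqu : ℝ) (hCqu : 1 ≤ Cqu) :
    ∃ C : ℝ, 0 < C ∧
      ∀ (N : ℕ) (T₀ : ℝ) (node : ℕ → ℝ) (u w : ℕ → Polynomial ℝ),
        0 < N → 0 < T₀ →
        (∀ j < N, node j < node (j + 1)) →
        (∀ i < N, ∀ j < N, node (i + 1) - node i ≤ Cqu * (node (j + 1) - node j)) →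
        (∀ j, (u j).degree ≤ m) → (∀ j, (w j).degree ≤ m) →
        (∀ v : ℕ → Polynomial ℝ, (∀ j, (v j).degree ≤ m) →
          brokenIP N node w v = ahDG T₀ N node u v) →
        (∀ j < N, cellNorm node ((u j).derivative) j
            ≤ (Real.sqrt T₀)⁻¹ * (1 + ((m : ℝ) + 1) / Real.sqrt (2 * (m : ℝ) + 1)) *
              cellNorm node (w j) j) ∧
        (∀ j < N, |dgJump N node u j|
            ≤ Real.sqrt (Cqu / T₀) * Real.sqrt (hmin N node j) *
              (2 + ((m : ℝ) + 1) / Real.sqrt (2 * (m : ℝ) + 1)) * cellNorm node (w j) j) ∧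
        Real.sqrt (seminormSq N node u)
          ≤ C * (Real.sqrt T₀)⁻¹ * brokenNorm N node w := by
  set Cip : ℝ := ((m:ℝ)+1) / Real.sqrt (2*(m:ℝ)+1) with hCip
  have hCip0 : 0 ≤ Cip := by positivity
  have hCqu0 : (0:ℝ) < Cqu := by linarith
  set S : ℝ := (1+Cip)^2 + Cqu*(2+Cip)^2 with hS
  have hS0 : 0 < S := by positivity
  refine ⟨Real.sqrt S, Real.sqrt_pos.mpr hS0, ?_⟩
  intro N T₀ node u w hN hT hmesh hqu hudeg hwdeg hRiesz
  have hT' : (0:ℝ) < Real.sqrt T₀ := Real.sqrt_pos.mpr hT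
  have hkey : ∀ j, j < N → ∀ r : ℝ[X], r.degree ≤ (m : WithBot ℕ) →
      pInt (node j) (node (j+1)) (w j * r)
        = Real.sqrt T₀ * (dgJump N node u j * r.eval (node j)
            + pInt (node j) (node (j+1)) ((u j).derivative * r)) :=
    fun j hj r hr => dg_key T₀ N m node u w hN hRiesz j hj r hr
  -- derivative estimate with the sharp constant Cip
  have A1' : ∀ j, j < N →
      Real.sqrt (pInt (node j) (node (j+1)) ((u j).derivative * (u j).derivative))
        ≤ (Real.sqrt T₀)⁻¹ * Cip * Real.sqrt (pInt (node j) (node (j+1)) (w j * w j)) := by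
    intro j hj
    rcases Nat.eq_zero_or_pos m with hm0 | hm
    · have hd0 : (u j).derivative = 0 := by
        have h0 : (u j).degree ≤ 0 := by
          have := hudeg j
          rw [hm0] at this
          exact_mod_cast this
        rw [Polynomial.eq_C_of_degree_le_zero h0, derivative_C]
      rw [hd0, mul_zero, pInt_zero, Real.sqrt_zero]
      positivity
    · exact deriv_est hT (hmesh j hj) m (by omega) _ _ _
        (le_trans (natDegree_derivative_le _)
          (Nat.sub_le_sub_right (natDegree_le_iff_degree_le.mpr (hudeg j)) 1))
        ((degree_derivative_le).trans (hudeg j))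
        (hkey j hj)
  -- first conjunct
  have A1 : ∀ j, j < N → cellNorm node ((u j).derivative) j
      ≤ (Real.sqrt T₀)⁻¹ * (1 + Cip) * cellNorm node (w j) j := by
    intro j hj
    rw [cellNorm_eq, cellNorm_eq]
    refine (A1' j hj).trans ?_
    apply mul_le_mul_of_nonneg_right _ (Real.sqrt_nonneg _)
    apply mul_le_mul_of_nonneg_left (by linarith) (by positivity)
  -- jump estimate with constant (1 + Cip)
  have A2' : ∀ j, j < N → |dgJump N node u j|
      ≤ (Real.sqrt T₀)⁻¹ * Real.sqrt (node (j+1) - node j) * (1 + Cip)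
          * Real.sqrt (pInt (node j) (node (j+1)) (w j * w j)) := by
    intro j hj
    exact jump_est hT (hmesh j hj) m _ _ _ (hkey j hj) (A1' j hj)
  -- mesh facts
  have hminf : ∀ j, j < N → 0 < hmin N node j ∧
      node (j+1) - node j ≤ Cqu * hmin N node j := by
    intro j hj
    have hmul : ∀ x y : ℝ, Cqu * min x y = min (Cqu * x) (Cqu * y) := fun x y =>
      mul_min_of_nonneg _ _ hCqu0.le
    by_cases hj0 : j = 0
    · subst hj0
      rw [hmin, if_pos rfl]
      have hlast : node (N-1) < node N := by
        have := hmesh (N-1) (by omega)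
        rwa [show N - 1 + 1 = N from by omega] at this
      have hfirst : node 0 < node 1 := hmesh 0 hN
      constructor
      · exact lt_min (by linarith) (by linarith)
      · rw [hmul]
        apply le_min
        · have := hqu 0 hN (N-1) (by omega)
          rwa [show N - 1 + 1 = N from by omega] at this
        · exact hqu 0 hN 0 hN
    · rw [hmin, if_neg hj0]
      have hprev : node (j-1) < node j := by
        have := hmesh (j-1) (by omega)
        rwa [show j - 1 + 1 = j from by omega] at this
      have hcur : node j < node (j+1) := hmesh j hj
      constructor
      · exact lt_min (by linarith) (by linarith)
      · rw [hmul]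
        apply le_min
        · have := hqu j hj (j-1) (by omega)
          rwa [show j - 1 + 1 = j from by omega] at this
        · exact hqu j hj j hj
  -- second conjunct
  have A2 : ∀ j, j < N → |dgJump N node u j|
      ≤ Real.sqrt (Cqu / T₀) * Real.sqrt (hmin N node j) * (2 + Cip)
          * cellNorm node (w j) j := by
    intro j hj
    rw [cellNorm_eq]
    refine (A2' j hj).trans ?_
    have h1 : Real.sqrt (node (j+1) - node j)
        ≤ Real.sqrt Cqu * Real.sqrt (hmin N node j) := by
      rw [← Real.sqrt_mul hCqu0.le]
      exact Real.sqrt_le_sqrt (hminf j hj).2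
    have h2 : Real.sqrt (Cqu / T₀) = Real.sqrt Cqu * (Real.sqrt T₀)⁻¹ := by
      rw [Real.sqrt_div hCqu0.le, div_eq_mul_inv]
    calc (Real.sqrt T₀)⁻¹ * Real.sqrt (node (j+1) - node j) * (1 + Cip)
          * Real.sqrt (pInt (node j) (node (j+1)) (w j * w j))
        ≤ (Real.sqrt T₀)⁻¹ * (Real.sqrt Cqu * Real.sqrt (hmin N node j)) * (2 + Cip)
          * Real.sqrt (pInt (node j) (node (j+1)) (w j * w j)) := by
          apply mul_le_mul_of_nonneg_right _ (Real.sqrt_nonneg _)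
          apply mul_le_mul (mul_le_mul_of_nonneg_left h1 (by positivity)) (by linarith)
            (by positivity) (by positivity)
      _ = Real.sqrt (Cqu / T₀) * Real.sqrt (hmin N node j) * (2 + Cip)
          * Real.sqrt (pInt (node j) (node (j+1)) (w j * w j)) := by rw [h2]; ring
  refine ⟨A1, A2, ?_⟩
  -- third conjunct
  set B := brokenIP N node w w with hB
  have hBsum : B = ∑ j ∈ Finset.range N, pInt (node j) (node (j+1)) (w j * w j) := by
    rw [hB, brokenIP]
    apply Finset.sum_congr rfl
    intro j _
    rw [pInt_eq]
  have hW0 : ∀ j ∈ Finset.range N, 0 ≤ pInt (node j) (node (j+1)) (w j * w j) := by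
    intro j hj
    exact pInt_sq_nonneg (hmesh j (Finset.mem_range.mp hj)).le _
  have hB0 : 0 ≤ B := by
    rw [hBsum]; exact Finset.sum_nonneg hW0
  have hEb : ∀ j ∈ Finset.range N,
      pInt (node j) (node (j+1)) ((u j).derivative * (u j).derivative)
        ≤ T₀⁻¹ * (1+Cip)^2 * pInt (node j) (node (j+1)) (w j * w j) := by
    intro j hjm
    have hj := Finset.mem_range.mp hjm
    have hE0 := pInt_sq_nonneg (hmesh j hj).le ((u j).derivative)
    have h := A1 j hj
    rw [cellNorm_eq, cellNorm_eq] at h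
    have hsq := pow_le_pow_left₀ (Real.sqrt_nonneg _) h 2
    rw [Real.sq_sqrt hE0] at hsq
    calc pInt (node j) (node (j+1)) ((u j).derivative * (u j).derivative)
        ≤ ((Real.sqrt T₀)⁻¹ * (1 + Cip)
            * Real.sqrt (pInt (node j) (node (j+1)) (w j * w j)))^2 := hsq
      _ = T₀⁻¹ * (1+Cip)^2 * pInt (node j) (node (j+1)) (w j * w j) := by
          rw [mul_pow, mul_pow, inv_pow, Real.sq_sqrt hT.le,
            Real.sq_sqrt (hW0 j hjm)]
  have hJb : ∀ j ∈ Finset.range N,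
      (dgJump N node u j)^2 / hmin N node j
        ≤ (Cqu/T₀) * (2+Cip)^2 * pInt (node j) (node (j+1)) (w j * w j) := by
    intro j hjm
    have hj := Finset.mem_range.mp hjm
    have hhm := (hminf j hj).1
    have h := A2 j hj
    rw [cellNorm_eq] at h
    have hsq := pow_le_pow_left₀ (abs_nonneg _) h 2
    rw [sq_abs] at hsq
    rw [div_le_iff₀ hhm]
    calc (dgJump N node u j)^2
        ≤ (Real.sqrt (Cqu / T₀) * Real.sqrt (hmin N node j) * (2 + Cip)
            * Real.sqrt (pInt (node j) (node (j+1)) (w j * w j)))^2 := hsq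
      _ = (Cqu/T₀) * hmin N node j * (2+Cip)^2 * pInt (node j) (node (j+1)) (w j * w j) := by
          rw [mul_pow, mul_pow, mul_pow, Real.sq_sqrt (by positivity : (0:ℝ) ≤ Cqu/T₀),
            Real.sq_sqrt hhm.le, Real.sq_sqrt (hW0 j hjm)]
      _ = (Cqu/T₀) * (2+Cip)^2 * pInt (node j) (node (j+1)) (w j * w j) * hmin N node j := by
          ring
  have hsem : seminormSq N node u ≤ T₀⁻¹ * S * B := by
    rw [seminormSq]
    have hfirst : (∑ j ∈ Finset.range N,
        ∫ x in (node j)..(node (j + 1)), ((u j).derivative.eval x) ^ 2)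
        = ∑ j ∈ Finset.range N,
            pInt (node j) (node (j+1)) ((u j).derivative * (u j).derivative) := by
      apply Finset.sum_congr rfl
      intro j _
      rw [pInt_eq_sq]
    rw [hfirst]
    calc (∑ j ∈ Finset.range N, pInt (node j) (node (j+1)) ((u j).derivative * (u j).derivative))
          + ∑ j ∈ Finset.range N, (dgJump N node u j)^2 / hmin N node j
        ≤ (∑ j ∈ Finset.range N,
            T₀⁻¹ * (1+Cip)^2 * pInt (node j) (node (j+1)) (w j * w j))
          + ∑ j ∈ Finset.range N,
            (Cqu/T₀) * (2+Cip)^2 * pInt (node j) (node (j+1)) (w j * w j) :=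
          add_le_add (Finset.sum_le_sum hEb) (Finset.sum_le_sum hJb)
      _ = T₀⁻¹ * S * B := by
          rw [← Finset.sum_add_distrib, hBsum, Finset.mul_sum]
          apply Finset.sum_congr rfl
          intro j _
          rw [hS]
          field_simp
  have hfin : Real.sqrt (seminormSq N node u) ≤ Real.sqrt (T₀⁻¹ * (S * B)) := by
    apply Real.sqrt_le_sqrt
    calc seminormSq N node u ≤ T₀⁻¹ * S * B := hsem
      _ = T₀⁻¹ * (S * B) := by ring
  refine hfin.trans (le_of_eq ?_)
  rw [Real.sqrt_mul (by positivity : (0:ℝ) ≤ T₀⁻¹), Real.sqrt_mul hS0.le,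
    Real.sqrt_inv]
  rw [show brokenNorm N node w = Real.sqrt B from rfl]
  ring
end

section
/- Let u ∈ U_h^m (periodic piecewise polynomial) with ∫_𝕋 u dx = 0, on a quasi-uniform mesh. Then the discrete Poincaré-Wirtinger inequality ‖u‖_{L²(𝕋)} ≤ C·|u|_{1,h} holds, where |u|²_{1,h} = ‖∂_h u‖²_{L²(𝕋)} + Σ_j h_{j−1/2}^{−1}·[u]²_{j−1/2}, and C depends only on |𝕋| (and the mesh quasi-uniformity constant). -/
open intervalIntegral MeasureTheory Finset

lemma polyII (p : Polynomial ℝ) (a b : ℝ) :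
    IntervalIntegrable (fun x => p.eval x) volume a b :=
  p.continuous.intervalIntegrable a b

lemma ftc_abs (p : Polynomial ℝ) {a b : ℝ} (hab : a ≤ b) :
    |p.eval b - p.eval a| ≤ ∫ x in a..b, |p.derivative.eval x| := by
  have h1 : ∫ x in a..b, p.derivative.eval x = p.eval b - p.eval a :=
    integral_eq_sub_of_hasDerivAt (fun x _ => p.hasDerivAt x) (polyII _ a b)
  rw [← h1]
  exact intervalIntegral.abs_integral_le_integral_abs hab

lemma cell_cs (p : Polynomial ℝ) {a b : ℝ} (hab : a ≤ b) :
    (∫ x in a..b, |p.eval x|) ≤ Real.sqrt (b - a) * Real.sqrt (∫ x in a..b, (p.eval x) ^ 2) := by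
  set I1 : ℝ := ∫ x in a..b, |p.eval x| with hI1def
  set I2 : ℝ := ∫ x in a..b, (p.eval x) ^ 2 with hI2def
  have hI2 : 0 ≤ I2 := intervalIntegral.integral_nonneg hab (fun x _ => sq_nonneg _)
  have hh : 0 ≤ b - a := by linarith
  have key : ∀ t : ℝ, 0 < t → I1 ≤ (b - a) * t / 2 + I2 / (2 * t) := by
    intro t ht
    have hmono : I1 ≤ ∫ x in a..b, (t / 2 + (p.eval x) ^ 2 / (2 * t)) := by
      apply intervalIntegral.integral_mono_on hab (p.continuous.abs.intervalIntegrable a b)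
        ((continuous_const.add ((p.continuous.pow 2).div_const (2 * t))).intervalIntegrable a b)
      intro x _
      have h2 : 0 ≤ (|p.eval x| - t) ^ 2 := sq_nonneg _
      have : |p.eval x| ^ 2 = (p.eval x) ^ 2 := sq_abs _
      show |p.eval x| ≤ t / 2 + (p.eval x) ^ 2 / (2 * t)
      rw [div_add_div _ _ (by norm_num) (by positivity), le_div_iff₀ (by positivity)]
      nlinarith
    calc I1 ≤ _ := hmono
      _ = (b - a) * t / 2 + I2 / (2 * t) := by
        rw [intervalIntegral.integral_add (g := fun x => (p.eval x) ^ 2 / (2 * t)) (intervalIntegrable_const)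
          (((p.continuous.pow 2).div_const (2 * t)).intervalIntegrable a b),
          intervalIntegral.integral_const, intervalIntegral.integral_div,
          hI2def, smul_eq_mul]
        ring
  rcases eq_or_lt_of_le hh with h0 | hpos
  · have : a = b := by linarith
    subst this
    simp [hI1def]
  rcases eq_or_lt_of_le hI2 with h2 | h2
  · have hle : I1 ≤ 0 := by
      refine le_of_forall_pos_le_add ?_
      intro ε hε
      have := key (2 * ε / (b - a)) (by positivity)
      rw [← h2] at this
      calc I1 ≤ (b - a) * (2 * ε / (b - a)) / 2 + 0 / (2 * (2 * ε / (b - a))) := this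
        _ = ε := by field_simp; ring
        _ ≤ 0 + ε := by linarith
    have : 0 ≤ Real.sqrt (b - a) * Real.sqrt I2 := by positivity
    linarith
  · set t : ℝ := Real.sqrt (I2 / (b - a)) with htdef
    have ht : 0 < t := Real.sqrt_pos.2 (by positivity)
    have ht2 : t ^ 2 = I2 / (b - a) := Real.sq_sqrt (by positivity)
    have h4 : (b - a) * t ^ 2 = I2 := by
      rw [ht2]; field_simp
    have heq : (b - a) * t / 2 + I2 / (2 * t) = Real.sqrt (b - a) * Real.sqrt I2 := by
      have h3 : (b - a) * t / 2 + I2 / (2 * t) = I2 / t := by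
        field_simp
        linear_combination h4
      have h6 : (b - a) * I2 = (I2 / t) ^ 2 := by
        rw [div_pow]
        field_simp
        linear_combination h4
      have h5 : I2 / t = Real.sqrt ((b - a) * I2) := by
        rw [h6, Real.sqrt_sq (by positivity)]
      rw [h3, h5, Real.sqrt_mul hh]
    calc I1 ≤ _ := key t ht
      _ = _ := heq

/-- Discrete Poincaré–Wirtinger inequality in the broken Sobolev setting: for mean-zero
periodic piecewise polynomials on a quasi-uniform mesh of the torus of length `L`,
`‖u‖_{L²} ≤ C |u|_{1,h}` with `C` depending only on `L` and the quasi-uniformity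
constant. -/
theorem discrete_poincare_wirtinger (L Cqu : ℝ) (hL : 0 < L) (hCqu : 1 ≤ Cqu) :
    ∃ C : ℝ, 0 < C ∧
      ∀ (N m : ℕ) (node : ℕ → ℝ) (u : ℕ → Polynomial ℝ),
        0 < N → node 0 = 0 → node N = L →
        (∀ j < N, node j < node (j + 1)) →
        (∀ i < N, ∀ j < N, node (i + 1) - node i ≤ Cqu * (node (j + 1) - node j)) →
        (∀ j, (u j).degree ≤ m) →
        (∑ j ∈ Finset.range N, ∫ x in (node j)..(node (j + 1)), (u j).eval x) = 0 →
        brokenNorm N node u ≤ C * Real.sqrt (seminormSq N node u) := by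
  refine ⟨3 * L, by positivity, ?_⟩
  intro N m node u hN h0 hNL hlt _hqu _hdeg hmean
  -- abbreviations
  set J : ℕ → ℝ := dgJump N node u with hJdef
  set D : ℕ → ℝ := fun j => ∫ x in (node j)..(node (j + 1)), |(u j).derivative.eval x| with hDdef
  set A : ℝ := ∑ j ∈ Finset.range N, ∫ x in (node j)..(node (j + 1)),
      ((u j).derivative.eval x) ^ 2 with hAdef
  set B : ℝ := ∑ j ∈ Finset.range N, (J j) ^ 2 / hmin N node j with hBdef
  set V : ℝ := (∑ j ∈ Finset.range N, D j) + ∑ j ∈ Finset.range N, |J j| with hVdef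
  set c : ℝ := (u 0).eval (node 0) with hcdef
  -- monotonicity of nodes
  have hle : ∀ i k : ℕ, i ≤ k → k ≤ N → node i ≤ node k := by
    intro i k hik hkN
    induction k with
    | zero => simp_all
    | succ k ih =>
      rcases Nat.eq_or_lt_of_le hik with h | h
      · rw [h]
      · have h1 : i ≤ k := Nat.lt_succ_iff.mp h
        exact le_trans (ih h1 (Nat.le_of_succ_le hkN)) (le_of_lt (hlt k hkN))
  have hposj : ∀ j < N, node j < node (j + 1) := hlt
  -- the inductive trace bound
  have trace : ∀ j, j < N → ∀ x, node j ≤ x → x ≤ node (j + 1) →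
      |(u j).eval x - c| ≤ (∑ i ∈ Finset.range j, (D i + |J (i + 1)|))
        + ∫ t in (node j)..x, |(u j).derivative.eval t| := by
    intro j
    induction j with
    | zero =>
      intro _ x hx1 _
      simpa using ftc_abs (u 0) hx1
    | succ j ih =>
      intro hjN x hx1 hx2
      have hj : j < N := Nat.lt_of_succ_lt hjN
      have e1 : |(u (j + 1)).eval x - (u (j + 1)).eval (node (j + 1))|
          ≤ ∫ t in (node (j + 1))..x, |(u (j + 1)).derivative.eval t| := ftc_abs _ hx1
      have e2 : J (j + 1) = (u (j + 1)).eval (node (j + 1)) - (u j).eval (node (j + 1)) := by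
        simp [hJdef, dgJump]
      have e3 := ih hj (node (j + 1)) (le_of_lt (hlt j hj)) le_rfl
      have e4 : (u (j + 1)).eval x - c
          = ((u (j + 1)).eval x - (u (j + 1)).eval (node (j + 1))) + J (j + 1)
            + ((u j).eval (node (j + 1)) - c) := by rw [e2]; ring
      have e5 : D j = ∫ t in (node j)..(node (j + 1)), |(u j).derivative.eval t| := rfl
      rw [e4, Finset.sum_range_succ]
      calc |_ + J (j + 1) + _| ≤ |(u (j + 1)).eval x - (u (j + 1)).eval (node (j + 1))|
            + |J (j + 1)| + |(u j).eval (node (j + 1)) - c| := by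
              exact (abs_add_le _ _).trans (by gcongr; exact abs_add_le _ _)
        _ ≤ _ := by rw [← e5] at e3; linarith
  -- nonnegativity of D on the mesh
  have hDnn : ∀ j, j < N → 0 ≤ D j := fun j hj =>
    intervalIntegral.integral_nonneg (le_of_lt (hlt j hj)) (fun x _ => abs_nonneg _)
  -- uniform pointwise bound
  have vbound : ∀ j, j < N → ∀ x, node j ≤ x → x ≤ node (j + 1) → |(u j).eval x - c| ≤ V := by
    intro j hj x hx1 hx2
    have t1 := trace j hj x hx1 hx2
    have t2 : (∫ t in (node j)..x, |(u j).derivative.eval t|) ≤ D j :=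
      intervalIntegral.integral_mono_interval le_rfl hx1 hx2
        (Filter.Eventually.of_forall fun t => abs_nonneg _)
        ((u j).derivative.continuous.abs.intervalIntegrable _ _)
    have t3 : ∑ i ∈ Finset.range j, D i + D j ≤ ∑ i ∈ Finset.range N, D i := by
      rw [← Finset.sum_range_succ]
      exact Finset.sum_le_sum_of_subset_of_nonneg (Finset.range_subset_range.2 hj)
        (fun i hi _ => hDnn i (Finset.mem_range.1 hi))
    have t4 : ∑ i ∈ Finset.range j, |J (i + 1)| ≤ ∑ i ∈ Finset.range N, |J i| := by
      have e : ∑ i ∈ Finset.Ico 1 (j + 1), |J i| = ∑ i ∈ Finset.range j, |J (i + 1)| := by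
        rw [Finset.sum_Ico_eq_sum_range]
        simp [add_comm]
      rw [← e]
      refine Finset.sum_le_sum_of_subset_of_nonneg ?_ (fun i _ _ => abs_nonneg _)
      intro i hi
      simp only [Finset.mem_Ico] at hi
      exact Finset.mem_range.2 (lt_of_lt_of_le hi.2 hj)
    have t5 : ∑ i ∈ Finset.range j, (D i + |J (i + 1)|)
        = ∑ i ∈ Finset.range j, D i + ∑ i ∈ Finset.range j, |J (i + 1)| :=
      Finset.sum_add_distrib
    rw [hVdef]
    linarith
  -- total length
  have hsum_h : ∑ j ∈ Finset.range N, (node (j + 1) - node j) = L := by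
    rw [Finset.sum_range_sub, hNL, h0, sub_zero]
  -- bound on |c|
  have hzero : ∑ j ∈ Finset.range N, (∫ x in (node j)..(node (j + 1)), ((u j).eval x - c))
      = -(c * L) := by
    have e : ∀ j ∈ Finset.range N,
        (∫ x in (node j)..(node (j + 1)), ((u j).eval x - c))
          = (∫ x in (node j)..(node (j + 1)), (u j).eval x) - (node (j + 1) - node j) * c := by
      intro j _
      rw [intervalIntegral.integral_sub (polyII _ _ _) intervalIntegrable_const,
        intervalIntegral.integral_const, smul_eq_mul]
    rw [Finset.sum_congr rfl e, Finset.sum_sub_distrib, hmean, ← Finset.sum_mul, hsum_h]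
    ring
  have habsint : ∀ j ∈ Finset.range N,
      |∫ x in (node j)..(node (j + 1)), ((u j).eval x - c)| ≤ (node (j + 1) - node j) * V := by
    intro j hj
    have hj' := Finset.mem_range.1 hj
    have hab := le_of_lt (hlt j hj')
    calc |∫ x in (node j)..(node (j + 1)), ((u j).eval x - c)|
        ≤ ∫ x in (node j)..(node (j + 1)), |(u j).eval x - c| :=
          intervalIntegral.abs_integral_le_integral_abs hab
      _ ≤ ∫ _x in (node j)..(node (j + 1)), V := by
          refine intervalIntegral.integral_mono_on hab
            (((u j).continuous.sub continuous_const).abs.intervalIntegrable _ _)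
            intervalIntegrable_const (fun x hx => vbound j hj' x hx.1 hx.2)
      _ = (node (j + 1) - node j) * V := by
          rw [intervalIntegral.integral_const, smul_eq_mul]
  have hcV : |c| ≤ V := by
    have h1 : |(-(c * L))| ≤ L * V := by
      rw [← hzero]
      calc |∑ j ∈ Finset.range N, (∫ x in (node j)..(node (j + 1)), ((u j).eval x - c))|
          ≤ ∑ j ∈ Finset.range N, |∫ x in (node j)..(node (j + 1)), ((u j).eval x - c)| :=
            Finset.abs_sum_le_sum_abs _ _
        _ ≤ ∑ j ∈ Finset.range N, (node (j + 1) - node j) * V := Finset.sum_le_sum habsint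
        _ = L * V := by rw [← Finset.sum_mul, hsum_h]
    rw [abs_neg, abs_mul, abs_of_pos hL] at h1
    have := mul_le_mul_of_nonneg_left (le_refl L) (abs_nonneg c)
    nlinarith
  have hVnn : 0 ≤ V := (abs_nonneg c).trans hcV
  -- bound on the broken L² norm squared
  have hIP : brokenIP N node u u ≤ 4 * L * V ^ 2 := by
    have per : ∀ j ∈ Finset.range N,
        (∫ x in (node j)..(node (j + 1)), (u j).eval x * (u j).eval x)
          ≤ (node (j + 1) - node j) * (4 * V ^ 2) := by
      intro j hj
      have hj' := Finset.mem_range.1 hj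
      have hab := le_of_lt (hlt j hj')
      have hp : ∀ x ∈ Set.Icc (node j) (node (j + 1)),
          (u j).eval x * (u j).eval x ≤ 4 * V ^ 2 := by
        intro x hx
        have h1 := vbound j hj' x hx.1 hx.2
        have h2 := abs_sub_abs_le_abs_sub ((u j).eval x) c
        have h3 : |(u j).eval x| ≤ 2 * V := by linarith
        calc (u j).eval x * (u j).eval x = |(u j).eval x| * |(u j).eval x| :=
              (abs_mul_abs_self _).symm
          _ ≤ (2 * V) * (2 * V) := mul_le_mul h3 h3 (abs_nonneg _) (by linarith)
          _ = 4 * V ^ 2 := by ring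
      calc (∫ x in (node j)..(node (j + 1)), (u j).eval x * (u j).eval x)
          ≤ ∫ _x in (node j)..(node (j + 1)), (4 * V ^ 2) :=
            intervalIntegral.integral_mono_on hab
              (((u j).continuous.mul (u j).continuous).intervalIntegrable _ _)
              intervalIntegrable_const hp
        _ = (node (j + 1) - node j) * (4 * V ^ 2) := by
            rw [intervalIntegral.integral_const, smul_eq_mul]
    calc brokenIP N node u u
        ≤ ∑ j ∈ Finset.range N, (node (j + 1) - node j) * (4 * V ^ 2) :=
          Finset.sum_le_sum per
      _ = 4 * L * V ^ 2 := by rw [← Finset.sum_mul, hsum_h]; ring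
  -- properties of hmin
  have hmprop : ∀ j, j < N → 0 < hmin N node j ∧ hmin N node j ≤ node (j + 1) - node j := by
    intro j hj
    rcases Nat.eq_zero_or_pos j with h | h
    · subst h
      have hN1 : N - 1 < N := Nat.sub_lt hN one_pos
      have e : N - 1 + 1 = N := Nat.succ_pred_eq_of_pos hN
      have h1 : 0 < node N - node (N - 1) := by
        have := hlt (N - 1) hN1
        rw [e] at this
        linarith
      have h2 : 0 < node 1 - node 0 := by have := hlt 0 hN; linarith
      constructor
      · simp only [hmin, if_pos rfl]
        exact lt_min h1 h2
      · simp only [hmin, if_pos rfl]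
        exact min_le_right _ _
    · have hj0 : j ≠ 0 := Nat.pos_iff_ne_zero.mp h
      have e : j - 1 + 1 = j := Nat.succ_pred_eq_of_pos h
      have h1 : 0 < node j - node (j - 1) := by
        have := hlt (j - 1) (lt_of_le_of_lt (Nat.sub_le _ _) hj)
        rw [e] at this
        linarith
      have h2 : 0 < node (j + 1) - node j := by have := hlt j hj; linarith
      constructor
      · simp only [hmin, if_neg hj0]
        exact lt_min h1 h2
      · simp only [hmin, if_neg hj0]
        exact min_le_right _ _
  have hAnn : 0 ≤ A :=
    Finset.sum_nonneg fun j hj =>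
      intervalIntegral.integral_nonneg (le_of_lt (hlt j (Finset.mem_range.1 hj)))
        (fun x _ => sq_nonneg _)
  have hBnn : 0 ≤ B :=
    Finset.sum_nonneg fun j hj =>
      div_nonneg (sq_nonneg _) (hmprop j (Finset.mem_range.1 hj)).1.le
  -- Cauchy–Schwarz on the derivative part
  have part1 : ∑ j ∈ Finset.range N, D j ≤ Real.sqrt L * Real.sqrt A := by
    have step1 : ∑ j ∈ Finset.range N, D j
        ≤ ∑ j ∈ Finset.range N, Real.sqrt (node (j + 1) - node j)
            * Real.sqrt (∫ x in (node j)..(node (j + 1)), ((u j).derivative.eval x) ^ 2) :=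
      Finset.sum_le_sum fun j hj => cell_cs _ (le_of_lt (hlt j (Finset.mem_range.1 hj)))
    have step2 := Real.sum_mul_le_sqrt_mul_sqrt (Finset.range N)
      (fun j => Real.sqrt (node (j + 1) - node j))
      (fun j => Real.sqrt (∫ x in (node j)..(node (j + 1)), ((u j).derivative.eval x) ^ 2))
    have e1 : ∑ j ∈ Finset.range N, (Real.sqrt (node (j + 1) - node j)) ^ 2
        = ∑ j ∈ Finset.range N, (node (j + 1) - node j) :=
      Finset.sum_congr rfl fun j hj =>
        Real.sq_sqrt (le_of_lt (by have := hlt j (Finset.mem_range.1 hj); linarith))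
    have e2 : ∑ j ∈ Finset.range N,
        (Real.sqrt (∫ x in (node j)..(node (j + 1)), ((u j).derivative.eval x) ^ 2)) ^ 2 = A :=
      Finset.sum_congr rfl fun j hj =>
        Real.sq_sqrt (intervalIntegral.integral_nonneg
          (le_of_lt (hlt j (Finset.mem_range.1 hj))) (fun x _ => sq_nonneg _))
    rw [e1, e2, hsum_h] at step2
    exact step1.trans step2
  -- Cauchy–Schwarz on the jump part
  have part2 : ∑ j ∈ Finset.range N, |J j| ≤ Real.sqrt L * Real.sqrt B := by
    have step1 : ∑ j ∈ Finset.range N, |J j|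
        = ∑ j ∈ Finset.range N, Real.sqrt (hmin N node j) * Real.sqrt ((J j) ^ 2 / hmin N node j) := by
      refine Finset.sum_congr rfl fun j hj => ?_
      have hm := hmprop j (Finset.mem_range.1 hj)
      rw [← Real.sqrt_mul hm.1.le, mul_div_cancel₀ _ (ne_of_gt hm.1), Real.sqrt_sq_eq_abs]
    have step2 := Real.sum_mul_le_sqrt_mul_sqrt (Finset.range N)
      (fun j => Real.sqrt (hmin N node j))
      (fun j => Real.sqrt ((J j) ^ 2 / hmin N node j))
    have e1 : ∑ j ∈ Finset.range N, (Real.sqrt (hmin N node j)) ^ 2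
        = ∑ j ∈ Finset.range N, hmin N node j :=
      Finset.sum_congr rfl fun j hj => Real.sq_sqrt (hmprop j (Finset.mem_range.1 hj)).1.le
    have e2 : ∑ j ∈ Finset.range N, (Real.sqrt ((J j) ^ 2 / hmin N node j)) ^ 2 = B :=
      Finset.sum_congr rfl fun j hj =>
        Real.sq_sqrt (div_nonneg (sq_nonneg _) (hmprop j (Finset.mem_range.1 hj)).1.le)
    rw [e1, e2] at step2
    have e3 : ∑ j ∈ Finset.range N, hmin N node j ≤ L := by
      rw [← hsum_h]
      exact Finset.sum_le_sum fun j hj => (hmprop j (Finset.mem_range.1 hj)).2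
    have e4 : Real.sqrt (∑ j ∈ Finset.range N, hmin N node j) ≤ Real.sqrt L :=
      Real.sqrt_le_sqrt e3
    calc ∑ j ∈ Finset.range N, |J j| = _ := step1
      _ ≤ Real.sqrt (∑ j ∈ Finset.range N, hmin N node j) * Real.sqrt B := step2
      _ ≤ Real.sqrt L * Real.sqrt B :=
        mul_le_mul_of_nonneg_right e4 (Real.sqrt_nonneg _)
  -- combine
  have hVle : V ≤ Real.sqrt L * (Real.sqrt A + Real.sqrt B) := by
    rw [hVdef, mul_add]
    exact add_le_add part1 part2
  have hV2 : V ^ 2 ≤ 2 * L * (A + B) := by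
    nlinarith [Real.sq_sqrt hAnn, Real.sq_sqrt hBnn, Real.sq_sqrt hL.le,
      Real.sqrt_nonneg A, Real.sqrt_nonneg B, Real.sqrt_nonneg L,
      sq_nonneg (Real.sqrt A - Real.sqrt B), hVnn, hVle,
      mul_le_mul_of_nonneg_left hVle hVnn]
  have hS : seminormSq N node u = A + B := by
    rw [hAdef, hBdef, hJdef]
    rfl
  have final : brokenIP N node u u ≤ (3 * L) ^ 2 * (A + B) := by nlinarith
  have hbn : brokenNorm N node u = Real.sqrt (brokenIP N node u u) := rfl
  rw [hbn, hS]
  calc Real.sqrt (brokenIP N node u u) ≤ Real.sqrt ((3 * L) ^ 2 * (A + B)) :=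
      Real.sqrt_le_sqrt final
    _ = 3 * L * Real.sqrt (A + B) := by
      rw [Real.sqrt_mul (sq_nonneg _), Real.sqrt_sq (by positivity)]
end

section
/- Suppose H : [0,∞) → ℝ is differentiable, nonnegative, and satisfies the differential inequality H'(t) + (2α/3)·H(t) ≤ C·M·H(t)² for all t ≥ 0, where α = min(τ, τ⁻¹)/C and M = max(τ, τ⁻¹) for some τ, C > 0. If H(0) ≤ (3κ²/2)·min(τ², τ⁻²) with κ = 1/(√6·C), then H(t) ≤ H(0)·exp(−κ·min(τ, τ⁻¹)·t) for all t ≥ 0. -/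
set_option maxHeartbeats 1000000 in
/-- Quantitative conclusion of the nonlinear hypocoercivity argument: if the modified
relative entropy `H` satisfies `H' + (2α/3) H ≤ C M H²` with `α = min(τ,τ⁻¹)/C`,
`M = max(τ,τ⁻¹)`, and the initial datum satisfies `H 0 ≤ (3κ²/2) min(τ²,τ⁻²)` with
`κ = 1/(√6 C)`, then `H` decays exponentially at rate `κ min(τ,τ⁻¹)`. -/
theorem hypocoercive_exponential_decay (H : ℝ → ℝ) (τ C : ℝ) (hτ : 0 < τ) (hC : 0 < C)
    (hdiff : Differentiable ℝ H)
    (hnonneg : ∀ t, 0 ≤ t → 0 ≤ H t)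
    (hineq : ∀ t, 0 ≤ t →
      deriv H t + (2 * (min τ τ⁻¹ / C) / 3) * H t ≤ C * max τ τ⁻¹ * (H t) ^ 2)
    (h0 : H 0 ≤ (3 * (1 / (Real.sqrt 6 * C)) ^ 2 / 2) * min (τ ^ 2) (τ⁻¹ ^ 2)) :
    ∀ t, 0 ≤ t →
      H t ≤ H 0 * Real.exp (-(1 / (Real.sqrt 6 * C)) * min τ τ⁻¹ * t) := by
  intro t ht
  set s := Real.sqrt 6 with hsdef
  have hs2 : s ^ 2 = 6 := Real.sq_sqrt (by norm_num)
  have hs0 : (0:ℝ) < s := Real.sqrt_pos.2 (by norm_num)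
  have h5s : (12:ℝ) < 5 * s := by nlinarith [hs2, hs0]
  set m := min τ τ⁻¹ with hmdef
  set M := max τ τ⁻¹ with hMdef
  have hτi : (0:ℝ) < τ⁻¹ := inv_pos.2 hτ
  have hm : 0 < m := lt_min hτ hτi
  have hM : 0 < M := lt_of_lt_of_le hτ (le_max_left _ _)
  have hmM : m * M = 1 := by
    rcases le_total τ τ⁻¹ with h | h
    · rw [hmdef, hMdef, min_eq_left h, max_eq_right h, mul_inv_cancel₀ hτ.ne']
    · rw [hmdef, hMdef, min_eq_right h, max_eq_left h, inv_mul_cancel₀ hτ.ne']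
  have hminsq : min (τ ^ 2) (τ⁻¹ ^ 2) = m ^ 2 := by
    rcases le_total τ τ⁻¹ with h | h
    · rw [hmdef, min_eq_left h, min_eq_left (by nlinarith)]
    · rw [hmdef, min_eq_right h, min_eq_right (by nlinarith)]
  have h00 : 0 ≤ H 0 := hnonneg 0 le_rfl
  have h0' : H 0 ≤ m ^ 2 / (4 * C ^ 2) := by
    have e : 3 * (1 / (s * C)) ^ 2 / 2 * m ^ 2 = m ^ 2 / (4 * C ^ 2) := by
      rw [div_pow, one_pow, mul_pow, hs2]
      field_simp
      ring
    rw [hminsq, e] at h0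
    exact h0
  have h0'' : H 0 * (4 * C ^ 2) ≤ m ^ 2 := (le_div_iff₀ (by positivity)).mp h0'
  set r : ℝ := 1 / (s * C) * m with hrdef
  have hr0 : 0 < r := by positivity
  set ε₁ : ℝ := m * (5 * s - 12) / (24 * s * C ^ 2 * M) with hε₁def
  have hε₁0 : 0 < ε₁ := by
    apply div_pos
    · nlinarith
    · positivity
  have hMm2 : M * m ^ 2 = m := by
    have : M * m ^ 2 = m * M * m := by ring
    rw [this, hmM, one_mul]
  -- main claim: for small positive ε, H t * exp (r t) ≤ H 0 + ε
  have key : ∀ ε : ℝ, 0 < ε → ε ≤ ε₁ → H t * Real.exp (r * t) ≤ H 0 + ε := by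
    intro ε hε hεle
    have hε' : ε * (24 * s * C ^ 2 * M) ≤ m * (5 * s - 12) :=
      (le_div_iff₀ (by positivity)).mp hεle
    have hf : ContinuousOn (fun u => H u * Real.exp (r * u)) (Set.Icc 0 t) :=
      (hdiff.continuous.mul ((Real.continuous_exp).comp (continuous_const.mul continuous_id))).continuousOn
    have hf' : ∀ x ∈ Set.Ico (0:ℝ) t, HasDerivWithinAt (fun u => H u * Real.exp (r * u))
        (deriv H x * Real.exp (r * x) + H x * (Real.exp (r * x) * r)) (Set.Ici x) x := by
      intro x _
      have hE : HasDerivAt (fun u => Real.exp (r * u)) (Real.exp (r * x) * r) x := by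
        simpa using ((hasDerivAt_id x).const_mul r).exp
      exact (((hdiff x).hasDerivAt).mul hE).hasDerivWithinAt
    have hB : ∀ x : ℝ, HasDerivAt (fun _ : ℝ => H 0 + ε) 0 x := fun x => hasDerivAt_const x _
    have ha : H 0 * Real.exp (r * 0) ≤ H 0 + ε := by
      simp [Real.exp_zero]
      linarith
    have bound : ∀ x ∈ Set.Ico (0:ℝ) t,
        H x * Real.exp (r * x) = H 0 + ε →
        deriv H x * Real.exp (r * x) + H x * (Real.exp (r * x) * r) < 0 := by
      intro x hx heq
      have hx0 : (0:ℝ) ≤ x := hx.1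
      have hE1 : (1:ℝ) ≤ Real.exp (r * x) := Real.one_le_exp (by positivity)
      have hEpos : (0:ℝ) < Real.exp (r * x) := Real.exp_pos _
      have hHnn : 0 ≤ H x := hnonneg x hx0
      have hHpos : 0 < H x := by
        by_contra hcon
        push_neg at hcon
        nlinarith
      have hHle : H x ≤ H 0 + ε := by
        nlinarith [mul_nonneg hHnn (by linarith : (0:ℝ) ≤ Real.exp (r * x) - 1)]
      have hd : deriv H x ≤ C * M * H x ^ 2 - (2 * (m / C) / 3) * H x := by
        have := hineq x hx0
        linarith
      -- the linear factor is negative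
      have hF : C * M * H x - 2 * (m / C) / 3 + 1 / (s * C) * m < 0 := by
        have hsC : (0:ℝ) < 12 * s * C := by positivity
        have hP : 12 * s * C * (C * M * H x - 2 * (m / C) / 3 + 1 / (s * C) * m) < 12 * s * C * 0 := by
          have expand : 12 * s * C * (C * M * H x - 2 * (m / C) / 3 + 1 / (s * C) * m)
              = 12 * s * (C ^ 2 * M * H x) - 8 * s * m + 12 * m := by
            field_simp
            ring
          rw [expand, mul_zero]
          have hMm2s : 3 * s * (M * m ^ 2) = 3 * s * m := by rw [hMm2]
          nlinarith [mul_le_mul_of_nonneg_left hHle (show (0:ℝ) ≤ 12 * s * C ^ 2 * M by positivity),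
            mul_le_mul_of_nonneg_left h0'' (show (0:ℝ) ≤ 3 * s * M by positivity),
            hMm2s, hε', mul_pos hm (show (0:ℝ) < 5 * s - 12 by linarith)]
        exact lt_of_mul_lt_mul_left hP hsC.le
      have h1 : deriv H x + r * H x < 0 := by
        have h2 : (C * M * H x - 2 * (m / C) / 3 + 1 / (s * C) * m) * H x < 0 :=
          mul_neg_of_neg_of_pos hF hHpos
        rw [hrdef]
        nlinarith [hd, h2]
      calc deriv H x * Real.exp (r * x) + H x * (Real.exp (r * x) * r)
          = (deriv H x + r * H x) * Real.exp (r * x) := by ring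
        _ < 0 := mul_neg_of_neg_of_pos h1 hEpos
    have := image_le_of_deriv_right_lt_deriv_boundary hf hf' ha hB bound
      (Set.right_mem_Icc.2 ht)
    simpa using this
  -- remove ε
  have hGle : H t * Real.exp (r * t) ≤ H 0 := by
    apply le_of_forall_pos_le_add
    intro ε hε
    have h1 := key (min ε ε₁) (lt_min hε hε₁0) (min_le_right _ _)
    have h2 : min ε ε₁ ≤ ε := min_le_left _ _
    linarith
  have hEpos : (0:ℝ) < Real.exp (r * t) := Real.exp_pos _
  have : H t ≤ H 0 / Real.exp (r * t) := (le_div_iff₀ hEpos).2 hGle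
  calc H t ≤ H 0 / Real.exp (r * t) := this
    _ = H 0 * Real.exp (-(1 / (s * C)) * m * t) := by
        rw [show -(1 / (s * C)) * m * t = -(r * t) by rw [hrdef]; ring, Real.exp_neg]
        ring
end
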